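/- arXiv:2507.13214 — 9 statements merged into one kernel-verified Lean document; each statement's English description precedes it below -/
import Mathlib

section
/- Let Q be a finite lattice and X an order-convex subset of Q with a minimum element. Suppose that for all γ, γ' in X such that γ∧γ' is covered by both γ and γ', the join γ∨γ' belongs to X. Then X has a maximum element. -/
/-!
Let `a, b ∈ X` be incomparable with `c = a ⊓ b ∈ X`. Covers `c ⋖ a' ≤ a` and `c ⋖ b' ≤ b` lie in `X`
by convexity and meet in `c`, so `d = a' ⊔ b' ∈ X`. The pairs `(a, d)`, `(b, d)` and then
`(a ⊔ d, b ⊔ d)` have meets strictly above `c`, so by downward induction on the meet their joins lie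
in `X`; the last join is `a ⊔ b`. Thus `X` is closed under joins, and a maximal element of `X` is its
maximum.
-/

section

variable {Q : Type*} [Lattice Q] {X : Set Q}

def CoverSupClosed (X : Set Q) : Prop :=
  ∀ γ ∈ X, ∀ γ' ∈ X, γ ⊓ γ' ⋖ γ → γ ⊓ γ' ⋖ γ' → γ ⊔ γ' ∈ X

namespace CoverSupClosed

theorem exists_mem_inf_lt_inf [IsStronglyAtomic Q] (hcov : CoverSupClosed X)
    (hX : X.OrdConnected) {a b : Q} (ha : a ∈ X) (hb : b ∈ X) (hab : a ⊓ b ∈ X)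
    (hnab : ¬a ≤ b) (hnba : ¬b ≤ a) :
    ∃ d ∈ X, d ≤ a ⊔ b ∧ a ⊓ b < a ⊓ d ∧ a ⊓ b < b ⊓ d := by
  obtain ⟨a', hca', ha'a⟩ := exists_covBy_le_of_lt (inf_lt_left.2 hnab)
  obtain ⟨b', hcb', hb'b⟩ := exists_covBy_le_of_lt (inf_lt_right.2 hnba)
  have hmeet : a' ⊓ b' = a ⊓ b :=
    le_antisymm (inf_le_inf ha'a hb'b) (le_inf hca'.le hcb'.le)
  have ha'X : a' ∈ X := hX.out hab ha ⟨hca'.le, ha'a⟩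
  have hb'X : b' ∈ X := hX.out hab hb ⟨hcb'.le, hb'b⟩
  exact ⟨a' ⊔ b', hcov a' ha'X b' hb'X (hmeet ▸ hca') (hmeet ▸ hcb'), sup_le_sup ha'a hb'b,
    hca'.lt.trans_le (le_inf ha'a le_sup_left), hcb'.lt.trans_le (le_inf hb'b le_sup_right)⟩

theorem sup_mem_of_inf_mem [IsStronglyAtomic Q] [WellFoundedGT Q] (hcov : CoverSupClosed X)
    (hX : X.OrdConnected) {a b : Q} (ha : a ∈ X) (hb : b ∈ X) (hab : a ⊓ b ∈ X) :
    a ⊔ b ∈ X := by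
  induction hc : a ⊓ b using WellFoundedGT.induction generalizing a b with
  | _ c ih =>
  subst hc
  by_cases hab_le : a ≤ b
  · rwa [sup_eq_right.2 hab_le]
  by_cases hba_le : b ≤ a
  · rwa [sup_eq_left.2 hba_le]
  obtain ⟨d, hd, hdle, had, hbd⟩ := hcov.exists_mem_inf_lt_inf hX ha hb hab hab_le hba_le
  have ih' : ∀ x ∈ X, ∀ y ∈ X, x ⊓ y ∈ X → a ⊓ b < x ⊓ y → x ⊔ y ∈ X :=
    fun x hx y hy hxy h ↦ ih _ h hx hy hxy rfl
  have hadX : a ⊔ d ∈ X := ih' a ha d hd (hX.out hab ha ⟨had.le, inf_le_left⟩) had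
  have hbdX : b ⊔ d ∈ X := ih' b hb d hd (hX.out hab hb ⟨hbd.le, inf_le_left⟩) hbd
  have hd_le : d ≤ (a ⊔ d) ⊓ (b ⊔ d) := le_inf le_sup_right le_sup_right
  have hsup : (a ⊔ d) ⊔ (b ⊔ d) = a ⊔ b := by
    rw [sup_sup_sup_comm, sup_idem, sup_eq_left.2 hdle]
  rw [← hsup]
  exact ih' _ hadX _ hbdX (hX.out hd hadX ⟨hd_le, inf_le_left⟩)
    (had.trans_le (inf_le_right.trans hd_le))

theorem supClosed [IsStronglyAtomic Q] [WellFoundedGT Q] (hcov : CoverSupClosed X)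
    (hX : X.OrdConnected) {m : Q} (hm : IsLeast X m) : SupClosed X :=
  fun _a ha _b hb ↦ hcov.sup_mem_of_inf_mem hX ha hb
    (hX.out hm.1 ha ⟨le_inf (hm.2 ha) (hm.2 hb), inf_le_left⟩)

end CoverSupClosed

end

theorem SupClosed.exists_isGreatest {S : Type*} [SemilatticeSup S] [WellFoundedGT S]
    {X : Set S} (hX : SupClosed X) (hne : X.Nonempty) : ∃ M, IsGreatest X M := by
  obtain ⟨M, hM⟩ := WellFoundedGT.exists_maximal ‹_› X hne
  exact ⟨M, hM.prop, fun x hx ↦ sup_eq_left.1 (hM.eq_of_ge (hX hM.prop hx) le_sup_left)⟩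

/-- Let `Q` be a finite lattice and `X` an order-convex subset of `Q`
with a minimum element.  If for all `γ, γ' ∈ X` such that `γ ⊓ γ'` is covered by both
`γ` and `γ'` we have `γ ⊔ γ' ∈ X`, then `X` has a maximum element. -/
theorem orderConvex_max {Q : Type*} [Lattice Q] [Fintype Q] (X : Set Q)
    (hconv : ∀ a ∈ X, ∀ b ∈ X, a ≤ b → Set.Icc a b ⊆ X)
    (hmin : ∃ m ∈ X, ∀ x ∈ X, m ≤ x)
    (hjoin : ∀ γ ∈ X, ∀ γ' ∈ X, γ ⊓ γ' ⋖ γ → γ ⊓ γ' ⋖ γ' → γ ⊔ γ' ∈ X) :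
    ∃ M ∈ X, ∀ x ∈ X, x ≤ M := by
  obtain ⟨m, hmX, hm⟩ := hmin
  have hX : X.OrdConnected := Set.ordConnected_iff.2 hconv
  have hsup : SupClosed X := CoverSupClosed.supClosed hjoin hX ⟨hmX, hm⟩
  obtain ⟨M, hMX, hM⟩ := hsup.exists_isGreatest ⟨m, hmX⟩
  exact ⟨M, hMX, hM⟩
end

section
/- Let Q be a finite poset with a minimum element and a maximum element. If for all distinct γ₀, γ₁, γ₂ in Q with γ₀ ⋖ γ₁ and γ₀ ⋖ γ₂, the elements γ₁ and γ₂ have a least upper bound in Q, then Q is a lattice. -/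
/-!
Fix `c ≤ x, y` and induct downwards on `c`. If `c < x` and `c < y`, pick covers `c ⋖ a ≤ x` and
`c ⋖ b ≤ y`. For `a = b` the induction hypothesis at `a` applies directly. Otherwise
`s = a ⊔ b` exists by assumption, and `x ⊔ y = (x ⊔ s) ⊔ y`, where both joins on the right are
over pairs lying above `a`, resp. `b`, so they exist by induction. Taking `c` to be the minimum,
all binary joins exist; then the meet of `a` and `b` is the join of the finite set of their common
lower bounds, which exists since the empty set has the minimum as its join.
-/

open Set

section

variable {α : Type*}

theorem isLUB_pair_iff [Preorder α] {a b s : α} :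
    IsLUB {a, b} s ↔ ∀ z, s ≤ z ↔ a ≤ z ∧ b ≤ z := by
  simp only [isLUB_iff_le_iff, upperBounds_insert, upperBounds_singleton, mem_inter_iff, mem_Ici]

theorem isLUB_pair_of_le [Preorder α] {a b : α} (hab : a ≤ b) : IsLUB {a, b} b :=
  isLUB_pair_iff.2 fun _ => ⟨fun hbz => ⟨hab.trans hbz, hbz⟩, And.right⟩

theorem IsLUB.insert_of_isLUB_pair [Preorder α] {s : Set α} {a u v : α} (hs : IsLUB s u)
    (hv : IsLUB {a, u} v) : IsLUB (insert a s) v := by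
  rw [isLUB_iff_le_iff] at hs ⊢
  intro z
  rw [isLUB_pair_iff.1 hv z, upperBounds_insert, mem_inter_iff, hs z, mem_Ici]

theorem isLUB_pair_of_isLUB_pair_of_le [Preorder α] {a b x y s t u : α} (hax : a ≤ x)
    (hby : b ≤ y) (hs : IsLUB {a, b} s) (ht : IsLUB {x, s} t) (hu : IsLUB {t, y} u) :
    IsLUB {x, y} u := by
  refine isLUB_pair_iff.2 fun z => ?_
  rw [isLUB_pair_iff.1 hu, isLUB_pair_iff.1 ht, isLUB_pair_iff.1 hs]
  exact ⟨fun ⟨⟨hxz, _⟩, hyz⟩ => ⟨hxz, hyz⟩,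
    fun ⟨hxz, hyz⟩ => ⟨⟨hxz, hax.trans hxz, hby.trans hyz⟩, hyz⟩⟩

theorem exists_isLUB_pair_of_le [PartialOrder α] [WellFoundedGT α] [IsStronglyAtomic α]
    (h : ∀ c a b : α, c ⋖ a → c ⋖ b → a ≠ b → ∃ s, IsLUB {a, b} s) (c : α) :
    ∀ {x y : α}, c ≤ x → c ≤ y → ∃ s, IsLUB {x, y} s := by
  induction c using WellFoundedGT.induction with
  | _ c ih =>
  intro x y hcx hcy
  obtain rfl | hcx := hcx.eq_or_lt
  · exact ⟨y, isLUB_pair_of_le hcy⟩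
  obtain rfl | hcy := hcy.eq_or_lt
  · exact ⟨x, by rw [pair_comm]; exact isLUB_pair_of_le hcx.le⟩
  obtain ⟨a, hca, hax⟩ := exists_covBy_le_of_lt hcx
  obtain ⟨b, hcb, hby⟩ := exists_covBy_le_of_lt hcy
  obtain rfl | hab := eq_or_ne a b
  · exact ih a hca.lt hax hby
  obtain ⟨s, hs⟩ := h c a b hca hcb hab
  obtain ⟨t, ht⟩ := ih a hca.lt hax (hs.1 (by simp))
  obtain ⟨u, hu⟩ := ih b hcb.lt ((hs.1 (by simp)).trans (ht.1 (by simp))) hby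
  exact ⟨u, isLUB_pair_of_isLUB_pair_of_le hax hby hs ht hu⟩

theorem Set.Finite.exists_isLUB_of_forall_exists_isLUB_pair [Preorder α] {m : α}
    (hm : ∀ x, m ≤ x) (hpair : ∀ a b : α, ∃ s, IsLUB {a, b} s) {s : Set α} (hs : s.Finite) :
    ∃ u, IsLUB s u := by
  induction s, hs using Set.Finite.induction_on with
  | empty => exact ⟨m, isLUB_empty_iff.2 hm⟩
  | @insert a s _ _ ih =>
    obtain ⟨u, hu⟩ := ih
    obtain ⟨v, hv⟩ := hpair a u
    exact ⟨v, hu.insert_of_isLUB_pair hv⟩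

end

theorem lattice_of_covers_have_lub_general {Q : Type*} [PartialOrder Q] [Fintype Q]
    (hmin : ∃ m : Q, ∀ x, m ≤ x)
    (h : ∀ γ₀ γ₁ γ₂ : Q, γ₀ ⋖ γ₁ → γ₀ ⋖ γ₂ → γ₁ ≠ γ₂ → ∃ s, IsLUB {γ₁, γ₂} s) :
    ∀ a b : Q, (∃ s, IsLUB {a, b} s) ∧ ∃ m, IsGLB {a, b} m := by
  obtain ⟨m, hm⟩ := hmin
  have hlub (a b : Q) : ∃ s, IsLUB {a, b} s := exists_isLUB_pair_of_le h m (hm a) (hm b)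
  intro a b
  obtain ⟨g, hg⟩ :=
    (toFinite (lowerBounds {a, b})).exists_isLUB_of_forall_exists_isLUB_pair hm hlub
  exact ⟨hlub a b, g, isLUB_lowerBounds.1 hg⟩

/-- Björner–Edelman–Ziegler: a finite poset with a minimum and a maximum
element in which any two distinct elements covering a common element have a least upper
bound is a lattice. -/
theorem lattice_of_covers_have_lub {Q : Type*} [PartialOrder Q] [Fintype Q]
    (hmin : ∃ m : Q, ∀ x, m ≤ x) (hmax : ∃ M : Q, ∀ x, x ≤ M)
    (h : ∀ γ₀ γ₁ γ₂ : Q, γ₀ ⋖ γ₁ → γ₀ ⋖ γ₂ → γ₁ ≠ γ₂ → ∃ s, IsLUB {γ₁, γ₂} s) :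
    ∀ a b : Q, (∃ s, IsLUB {a, b} s) ∧ ∃ m, IsGLB {a, b} m :=
  lattice_of_covers_have_lub_general hmin h
end

section
/- A tableau τ : Δ_{n-1} → ℤ_{≥0} is balanced (every Λ-shape is balanced) if and only if for every box (i,j) ∈ Δ_{n-1}, the hook of (i,j) is balanced in τ, i.e., τ(i,j) is the median of the multiset of entries of τ on hook(i,j). -/
open Classical

noncomputable section

/-- 1-based value of a permutation of `Fin n` at a 1-based position `j`. -/
def permVal {n : ℕ} (w : Equiv.Perm (Fin n)) (j : ℕ) : ℕ :=
  if h : 1 ≤ j ∧ j ≤ n then (w ⟨j - 1, by omega⟩ : ℕ) + 1 else 0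

/-- `(i,j)` is an inversion of `w`: `1 ≤ i < j ≤ n` and the (1-based) position of the
value `j` in the one-line notation of `w` precedes that of `i`. -/
def IsInv {n : ℕ} (w : Equiv.Perm (Fin n)) (i j : ℕ) : Prop :=
  1 ≤ i ∧ i < j ∧ j ≤ n ∧ permVal w.symm j < permVal w.symm i

/-- Lehmer form entry at box `(i,j)`: the number of `k ∈ [1, T(i,j)-1]` that do not
appear below box `(i,j)` in column `j`. -/
def lehmer (T : ℕ → ℕ → ℕ) (i j : ℕ) : ℕ :=
  ((Finset.Ico 1 (T i j)).filter fun k => ∀ i', 1 ≤ i' → i' < i → T i' j ≠ k).card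

/-- Incrementing box `(i,j)` of `T` yields `T'`:  with `a = T(i,j)` and `b` the smallest
integer greater than `a` not appearing below `(i,j)` in column `j`, either a pure
increment (if `b` is absent from column `j`) or a trade increment (swap `a` and `b`). -/
def IncrementAt (T T' : ℕ → ℕ → ℕ) (i j : ℕ) : Prop :=
  ∃ b, T i j < b ∧
    (∀ k, T i j < k → k < b → ∃ i', 1 ≤ i' ∧ i' < i ∧ T i' j = k) ∧
    (∀ i', 1 ≤ i' → i' < i → T i' j ≠ b) ∧
    (((∀ i', 1 ≤ i' → T i' j ≠ b) ∧
        T' = fun a c => if a = i ∧ c = j then b else T a c) ∨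
      (∃ i'', i < i'' ∧ T i'' j = b ∧
        T' = fun a c =>
          if a = i ∧ c = j then b else if a = i'' ∧ c = j then T i j else T a c))

/-- `IncBy M T T'`: `T'` is obtained from `T` by incrementing each box of the
multiset `M` (with multiplicity). -/
inductive IncBy : Multiset (ℕ × ℕ) → (ℕ → ℕ → ℕ) → (ℕ → ℕ → ℕ) → Prop
  | nil (T : ℕ → ℕ → ℕ) : IncBy 0 T T
  | cons {M : Multiset (ℕ × ℕ)} {T T' T'' : ℕ → ℕ → ℕ} {i j : ℕ} :
      IncrementAt T T' i j → IncBy M T' T'' → IncBy ((i, j) ::ₘ M) T T''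

/-- Column-injective tableau for `w`: a box has a nonzero entry iff it is an inversion
of `w`, and the nonzero entries in each column are distinct. -/
def ColInj {n : ℕ} (w : Equiv.Perm (Fin n)) (T : ℕ → ℕ → ℕ) : Prop :=
  (∀ i j, T i j ≠ 0 ↔ IsInv w i j) ∧
  ∀ i i' j, 1 ≤ i → i < i' → i' < j → T i j ≠ 0 → T i' j ≠ 0 → T i j ≠ T i' j

/-- The Λ-shape `Λ(i,j,k)` is balanced in `T`. -/
def LBal (T : ℕ → ℕ → ℕ) (i j k : ℕ) : Prop :=
  min (T i j) (T j k) ≤ T i k ∧ T i k ≤ max (T i j) (T j k)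

/-- Every Λ-shape of `Δ_{n-1}` is balanced in `T`. -/
def BalancedTab (n : ℕ) (T : ℕ → ℕ → ℕ) : Prop :=
  ∀ i j k, 1 ≤ i → i < j → j < k → k ≤ n → LBal T i j k

/-- Inversions tableau for `w`: balanced column-injective tableau whose entries in
row `i` are at most `i`. -/
def InvTab {n : ℕ} (w : Equiv.Perm (Fin n)) (T : ℕ → ℕ → ℕ) : Prop :=
  ColInj w T ∧ BalancedTab n T ∧ ∀ i j, T i j ≤ i

/-- The multiset of entries of `T` on `hook(i,k)`. -/
def hookEntries (T : ℕ → ℕ → ℕ) (i k : ℕ) : Multiset ℕ :=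
  (T i k ::ₘ (Finset.Ioo i k).val.map fun r => T r k) +
    (Finset.Ioo i k).val.map fun c => T i c

/-- The median ((k-i)-th smallest of the `2(k-i)-1` entries) of the hook of `(i,k)`. -/
def hookMedian (T : ℕ → ℕ → ℕ) (i k : ℕ) : ℕ :=
  ((hookEntries T i k).sort (· ≤ ·)).getD (k - i - 1) 0

/-!
Write `x = T(i,k)`. Besides `x`, the hook of `(i,k)` consists of the pairs `(T(i,j), T(j,k))`
for `i < j < k`, so `x` is its median iff at least `k-i-1` of these `2(k-i-1)` entries are `≤ x`
and at least `k-i-1` are `≥ x` (`HookBalanced`). If every Λ-shape is balanced, each pair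
straddles `x`, which gives both counts. Conversely, induct on `k-i`: were the pair at `j` strictly
above `x`, the first count would produce, by pigeonhole, a `j'` whose pair lies weakly below `x`;
but the two shorter Λ-shapes through `j` and `j'` are balanced by induction, and they force
`min (T(i,j), T(j,k)) ≤ max (T(i,j'), T(j',k))`. The case of a pair below `x` is symmetric.
-/

open Finset

theorem List.Pairwise.getElem_iff_lt_countP {α : Type*} [Preorder α] {l : List α}
    (hl : l.Pairwise (· ≤ ·)) {q : α → Bool} (hq : ∀ a b, a ≤ b → q b → q a) {p : ℕ}
    (hp : p < l.length) : q l[p] ↔ p < l.countP q := by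
  induction l generalizing p with
  | nil => simp at hp
  | cons a t ih =>
    have hzero : ¬ q a → t.countP q = 0 := fun h =>
      List.countP_eq_zero.2 fun b hb hqb => h (hq a b ((List.pairwise_cons.1 hl).1 b hb) hqb)
    cases p with
    | zero => by_cases hqa : q a <;> simp [hqa, hzero]
    | succ p =>
      rw [List.getElem_cons_succ, ih hl.of_cons (by simpa using hp), List.countP_cons]
      by_cases hqa : q a <;> simp [hqa, hzero]

theorem Multiset.getElem_sort_eq_iff {α : Type*} [LinearOrder α] (M : Multiset α) {p : ℕ}
    (hp : p < (M.sort (· ≤ ·)).length) (x : α) :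
    (M.sort (· ≤ ·))[p] = x ↔ M.countP (· < x) ≤ p ∧ p < M.countP (· ≤ x) := by
  have hl := M.pairwise_sort (· ≤ ·)
  have hle := hl.getElem_iff_lt_countP (q := fun a => a ≤ x)
    (fun a b hab hb => by simpa using le_trans hab (by simpa using hb)) hp
  have hlt := hl.getElem_iff_lt_countP (q := fun a => a < x)
    (fun a b hab hb => by simpa using lt_of_le_of_lt hab (by simpa using hb)) hp
  simp only [decide_eq_true_eq, ← Multiset.coe_countP, Multiset.sort_eq] at hle hlt
  rw [← not_lt, ← hle, ← hlt, not_lt]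
  exact le_antisymm_iff.trans and_comm

theorem Finset.card_le_card_filter_add_card_filter {ι : Type*} {s : Finset ι} {P Q : ι → Prop}
    [DecidablePred P] [DecidablePred Q] (h : ∀ j ∈ s, P j ∨ Q j) :
    #s ≤ #(s.filter P) + #(s.filter Q) := by
  calc #s = #(s.filter fun j => P j ∨ Q j) := by rw [filter_true_of_mem h]
    _ ≤ #(s.filter P) + #(s.filter Q) := by rw [filter_or]; exact card_union_le _ _

theorem Finset.exists_mem_and_of_card_le_card_filter_add_card_filter {ι : Type*}
    {s : Finset ι} {P Q : ι → Prop} [DecidablePred P] [DecidablePred Q]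
    (h : #s ≤ #(s.filter P) + #(s.filter Q)) {j : ι} (hj : j ∈ s) (hPj : ¬ P j) (hQj : ¬ Q j) :
    ∃ j' ∈ s, P j' ∧ Q j' := by
  by_contra! hPQ
  have hdisj : s.filter P ∩ s.filter Q = ∅ := by
    rw [← filter_and]
    exact filter_false_of_mem fun j' hj' ⟨hP, hQ⟩ => hPQ j' hj' hP hQ
  have hsub : s.filter P ∪ s.filter Q ⊆ s.erase j := by
    rw [← filter_or]
    intro j' hj'
    obtain ⟨hj's, hPQj'⟩ := mem_filter.1 hj'
    exact mem_erase.2 ⟨by rintro rfl; tauto, hj's⟩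
  have := card_union_add_card_inter (s.filter P) (s.filter Q)
  have := card_le_card hsub
  have := card_erase_of_mem hj
  simp only [hdisj, card_empty] at *
  have := card_pos.2 ⟨j, hj⟩
  omega

def HookBalanced (T : ℕ → ℕ → ℕ) (i k : ℕ) : Prop :=
  k - i - 1 ≤ #{j ∈ Ioo i k | T i j ≤ T i k} + #{j ∈ Ioo i k | T j k ≤ T i k} ∧
  k - i - 1 ≤ #{j ∈ Ioo i k | T i k ≤ T i j} + #{j ∈ Ioo i k | T i k ≤ T j k}

theorem countP_hookEntries (T : ℕ → ℕ → ℕ) (i k : ℕ) (p : ℕ → Prop) [DecidablePred p] :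
    (hookEntries T i k).countP p = (if p (T i k) then 1 else 0) +
      #{r ∈ Ioo i k | p (T r k)} + #{c ∈ Ioo i k | p (T i c)} := by
  simp only [hookEntries, Multiset.countP_add, Multiset.countP_cons, Multiset.countP_map]
  exact congrArg (· + _) (Nat.add_comm _ _)

theorem eq_hookMedian_iff_hookBalanced (T : ℕ → ℕ → ℕ) (i k : ℕ) :
    T i k = hookMedian T i k ↔ HookBalanced T i k := by
  have hlen : k - i - 1 < ((hookEntries T i k).sort (· ≤ ·)).length := by
    simp [hookEntries, Multiset.length_sort]
  rw [hookMedian, List.getD_eq_getElem _ _ hlen, eq_comm, Multiset.getElem_sort_eq_iff,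
    countP_hookEntries, countP_hookEntries, HookBalanced]
  have hrow := card_filter_add_card_filter_not (s := Ioo i k) (fun c => T i k ≤ T i c)
  have hcol := card_filter_add_card_filter_not (s := Ioo i k) (fun r => T i k ≤ T r k)
  simp only [not_le, le_refl, lt_irrefl, if_true, if_false, Nat.card_Ioo] at *
  omega

theorem hookBalanced_of_lBal {T : ℕ → ℕ → ℕ} {i k : ℕ} (h : ∀ j, i < j → j < k → LBal T i j k) :
    HookBalanced T i k := by
  rw [HookBalanced, ← Nat.card_Ioo]
  constructor <;> apply card_le_card_filter_add_card_filter <;> intro j hj <;>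
    obtain ⟨hmin, hmax⟩ := h j (mem_Ioo.1 hj).1 (mem_Ioo.1 hj).2
  · exact min_le_iff.1 hmin
  · exact le_max_iff.1 hmax

theorem min_le_max_of_lBal {T : ℕ → ℕ → ℕ} {i j j' k : ℕ} (hij : i < j) (hjk : j < k)
    (hij' : i < j') (hj'k : j' < k)
    (hbal : ∀ a b c, i ≤ a → a < b → b < c → c ≤ k → c - a < k - i → LBal T a b c) :
    min (T i j) (T j k) ≤ max (T i j') (T j' k) := by
  rcases lt_trichotomy j j' with h | rfl | h
  · have := hbal i j j' le_rfl hij h (by omega) (by omega)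
    have := hbal j j' k (by omega) h hj'k le_rfl (by omega)
    unfold LBal at *
    omega
  · exact min_le_max
  · have := hbal i j' j le_rfl hij' h (by omega) (by omega)
    have := hbal j' j k (by omega) h hjk le_rfl (by omega)
    unfold LBal at *
    omega

theorem lBal_of_hookBalanced {T : ℕ → ℕ → ℕ} {i j k : ℕ}
    (h : ∀ a c, i ≤ a → a < c → c ≤ k → HookBalanced T a c) (hij : i < j) (hjk : j < k) :
    LBal T i j k := by
  induction hm : k - i using Nat.strong_induction_on generalizing i j k with
  | _ m ih =>
  have hinner : ∀ a b c, i ≤ a → a < b → b < c → c ≤ k → c - a < k - i → LBal T a b c :=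
    fun a b c hia hab hbc hck hlt =>
      ih (c - a) (by omega) (fun a' c' _ hac' _ => h a' c' (by omega) hac' (by omega)) hab hbc rfl
  have hj : j ∈ Ioo i k := mem_Ioo.2 ⟨hij, hjk⟩
  obtain ⟨hle, hge⟩ := h i k le_rfl (by omega) le_rfl
  rw [← Nat.card_Ioo] at hle hge
  constructor
  · by_contra! hlt
    obtain ⟨hlt_ij, hlt_jk⟩ := lt_min_iff.1 hlt
    obtain ⟨j', hj', hij', hj'k⟩ := exists_mem_and_of_card_le_card_filter_add_card_filter hle hj
      hlt_ij.not_ge hlt_jk.not_ge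
    have := min_le_max_of_lBal hij hjk (mem_Ioo.1 hj').1 (mem_Ioo.1 hj').2 hinner
    omega
  · by_contra! hlt
    obtain ⟨hij_lt, hjk_lt⟩ := max_lt_iff.1 hlt
    obtain ⟨j', hj', hij', hj'k⟩ := exists_mem_and_of_card_le_card_filter_add_card_filter hge hj
      hij_lt.not_ge hjk_lt.not_ge
    have := min_le_max_of_lBal (mem_Ioo.1 hj').1 (mem_Ioo.1 hj').2 hij hjk hinner
    omega

/-- A tableau on `Δ_{n-1}` is balanced iff every hook is balanced,
i.e. each entry `T(i,k)` is the median of the entries of `T` on `hook(i,k)`. -/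
theorem balanced_iff_hooks_balanced (n : ℕ) (T : ℕ → ℕ → ℕ) :
    BalancedTab n T ↔ ∀ i k, 1 ≤ i → i < k → k ≤ n → T i k = hookMedian T i k := by
  simp only [eq_hookMedian_iff_hookBalanced]
  constructor
  · intro hbal i k hi _ hkn
    exact hookBalanced_of_lBal fun j hij hjk => hbal i j k hi hij hjk hkn
  · intro hhook i j k hi hij hjk hkn
    exact lBal_of_hookBalanced (fun a c hia hac hck => hhook a c (by omega) hac (by omega)) hij hjk
end
end

section
/- For every permutation w ∈ S_n, the map Λ sending a column-injective tableau T for w to its Lehmer form Λ(T) is injective on the set of column-injective tableaux for w. -/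
open Classical

noncomputable section

lemma lehmer_key (P : ℕ → Prop) {a b : ℕ} (ha : 1 ≤ a) (hPa : P a) (hab : a < b) :
    ((Finset.Ico 1 a).filter P).card < ((Finset.Ico 1 b).filter P).card := by
  apply Finset.card_lt_card
  rw [Finset.ssubset_iff_of_subset
    (Finset.filter_subset_filter _ (Finset.Ico_subset_Ico le_rfl (le_of_lt hab)))]
  exact ⟨a, Finset.mem_filter.mpr ⟨Finset.mem_Ico.mpr ⟨ha, hab⟩, hPa⟩,
    fun hmem => by simp [Finset.mem_filter, Finset.mem_Ico] at hmem⟩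

/-- The Lehmer form map `Λ` is injective on column-injective
tableaux for `w`. -/
theorem lehmer_injective {n : ℕ} (w : Equiv.Perm (Fin n)) (T T' : ℕ → ℕ → ℕ)
    (hT : ColInj w T) (hT' : ColInj w T')
    (h : ∀ i j, IsInv w i j → lehmer T i j = lehmer T' i j) :
    T = T' := by
  funext i j
  induction i using Nat.strong_induction_on with
  | _ i ih =>
    by_cases hinv : IsInv w i j
    · have h1 : T i j ≠ 0 := (hT.1 i j).mpr hinv
      have h2 : T' i j ≠ 0 := (hT'.1 i j).mpr hinv
      have hij : i < j := hinv.2.1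
      have hcol : ∀ i', i' < i → T i' j = T' i' j := fun i' hi' => ih i' hi'
      have hl := h i j hinv
      -- rewrite lehmer T i j using T' entries below
      have heq : lehmer T i j =
          ((Finset.Ico 1 (T i j)).filter
            fun k => ∀ i', 1 ≤ i' → i' < i → T' i' j ≠ k).card := by
        unfold lehmer
        congr 1
        apply Finset.ext
        intro k
        simp only [Finset.mem_filter, and_congr_right_iff]
        intro _
        constructor <;> intro hp i' h1' h2'
        · rw [← hcol i' h2']; exact hp i' h1' h2'
        · rw [hcol i' h2']; exact hp i' h1' h2'
      have hP : ∀ i', 1 ≤ i' → i' < i → T' i' j ≠ T i j := by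
        intro i' h1' h2'
        rw [← hcol i' h2']
        by_cases hz : T i' j = 0
        · rw [hz]; exact fun e => h1 e.symm
        · exact hT.2 i' i j h1' h2' hij hz h1
      have hP' : ∀ i', 1 ≤ i' → i' < i → T' i' j ≠ T' i j := by
        intro i' h1' h2'
        by_cases hz : T' i' j = 0
        · rw [hz]; exact fun e => h2 e.symm
        · exact hT'.2 i' i j h1' h2' hij hz h2
      rcases lt_trichotomy (T i j) (T' i j) with hlt | he | hgt
      · exfalso
        have := lehmer_key (fun k => ∀ i', 1 ≤ i' → i' < i → T' i' j ≠ k)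
          (Nat.one_le_iff_ne_zero.mpr h1) hP hlt
        have h3 : lehmer T i j < lehmer T' i j := by rw [heq]; exact this
        omega
      · exact he
      · exfalso
        have := lehmer_key (fun k => ∀ i', 1 ≤ i' → i' < i → T' i' j ≠ k)
          (Nat.one_le_iff_ne_zero.mpr h2) hP' hgt
        have h3 : lehmer T' i j < lehmer T i j := by rw [heq]; exact this
        omega
    · have h1 : T i j = 0 := by
        by_contra hc; exact hinv ((hT.1 i j).mp hc)
      have h2 : T' i j = 0 := by
        by_contra hc; exact hinv ((hT'.1 i j).mp hc)
      rw [h1, h2]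
end
end

section
/- If T is a column-injective tableau for a permutation w and (i,j) ∈ ID(w), then the Lehmer form of the incremented tableau ↑_{(i,j)} T is obtained from the Lehmer form Λ(T) by adding 1 to the entry in box (i,j) and leaving all other entries unchanged. -/
open Classical

noncomputable section

/-! Both kinds of increment act on column `j` as the transposition `σ = (a b)` of the values
`a = T(i,j)` and `b` (a pure increment because `b` is absent from the column, a trade because `b`
sits in the box it trades with), and trivially on the other columns. If `S` is the set of values
below a box of column `j` with entry `e`, its Lehmer entry is `#([1,e) \ S)` before and
`#([1,σe) \ σS)` after. For `e ≠ a, b`, `σ` fixes `[1,e)` setwise unless `a < e < b`; but such an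
`e` sits below row `i`, where `S` contains neither `a` nor `b` and `σS = S`. For the two boxes
holding `a` and `b`, all values strictly between `a` and `b` lie in `S`, so `[1,b) \ S` and
`[1,a) \ S` differ by `a` alone when `a ∉ S` (the box `(i,j)`) and not at all when `a ∈ S`
(the trade partner, where moreover `[1,a)` is `σ`-stable).
-/

open Finset Equiv

section Counting

variable {α : Type*} [DecidableEq α]

theorem image_swap_eq_self {I : Finset α} {x y : α} (h : x ∈ I ↔ y ∈ I) :
    I.image (swap x y) = I := by
  ext z
  rw [← Equiv.coe_toEmbedding, ← map_eq_image, mem_map_equiv, Equiv.symm_swap]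
  rcases eq_or_ne z x with rfl | hzx
  · rw [swap_apply_left]; exact h.symm
  rcases eq_or_ne z y with rfl | hzy
  · rw [swap_apply_right]; exact h
  rw [swap_apply_of_ne_of_ne hzx hzy]

theorem card_sdiff_image_swap {I : Finset α} (S : Finset α) {x y : α} (h : x ∈ I ↔ y ∈ I) :
    #(I \ S.image (swap x y)) = #(I \ S) := by
  conv_lhs => rw [← image_swap_eq_self h, ← image_sdiff _ _ (swap x y).injective]
  exact card_image_of_injective _ (swap x y).injective

end Counting

theorem card_Ico_sdiff_of_Ioo_subset {S : Finset ℕ} {u v : ℕ} (hu : 1 ≤ u) (huv : u < v)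
    (hS : Ioo u v ⊆ S) :
    #(Ico 1 v \ S) = #(Ico 1 u \ S) + if u ∈ S then 0 else 1 := by
  have hsplit : Ico u v \ S = if u ∈ S then ∅ else {u} := by
    ext k
    have := @hS k
    simp only [mem_sdiff, mem_Ico, mem_Ioo] at this ⊢
    split_ifs <;> grind
  rw [← Ico_union_Ico_eq_Ico hu huv.le, union_sdiff_distrib, card_union_of_disjoint
    ((Ico_disjoint_Ico_consecutive 1 u v).mono sdiff_le sdiff_le), hsplit]
  split_ifs <;> rfl

def valuesBelow (T : ℕ → ℕ → ℕ) (a c : ℕ) : Finset ℕ :=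
  (Ico 1 a).image (T · c)

theorem mem_valuesBelow {T : ℕ → ℕ → ℕ} {a c k : ℕ} :
    k ∈ valuesBelow T a c ↔ ∃ x, 1 ≤ x ∧ x < a ∧ T x c = k := by
  simp [valuesBelow, and_assoc]

theorem valuesBelow_mono {T : ℕ → ℕ → ℕ} {a a' : ℕ} (c : ℕ) (h : a ≤ a') :
    valuesBelow T a c ⊆ valuesBelow T a' c :=
  image_subset_image (Ico_subset_Ico_right h)

theorem lehmer_eq_card_sdiff (T : ℕ → ℕ → ℕ) (a c : ℕ) :
    lehmer T a c = #(Ico 1 (T a c) \ valuesBelow T a c) := by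
  unfold lehmer
  congr 1
  ext k
  simp [mem_valuesBelow]

theorem lehmer_congr_column {T T' : ℕ → ℕ → ℕ} {c : ℕ} (h : ∀ r, T' r c = T r c) (a : ℕ) :
    lehmer T' a c = lehmer T a c := by
  simp only [lehmer_eq_card_sdiff, valuesBelow, h]

theorem lehmer_eq_card_sdiff_image_swap {T T' : ℕ → ℕ → ℕ} {c x y : ℕ}
    (h : ∀ r, T' r c = swap x y (T r c)) (a : ℕ) :
    lehmer T' a c = #(Ico 1 (swap x y (T a c)) \ (valuesBelow T a c).image (swap x y)) := by
  rw [lehmer_eq_card_sdiff, h, valuesBelow, valuesBelow, image_image]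
  simp only [Function.comp_def, h]

namespace ColInj

variable {n : ℕ} {w : Equiv.Perm (Fin n)} {T : ℕ → ℕ → ℕ}

theorem eq_of_apply_eq (hT : ColInj w T) {x y c : ℕ} (hx : T x c ≠ 0) (h : T x c = T y c) :
    x = y := by
  have hxi := (hT.1 x c).1 hx
  have hyi := (hT.1 y c).1 (h ▸ hx)
  by_contra hne
  rcases Nat.lt_or_gt_of_ne hne with hlt | hlt
  · exact hT.2 x y c hxi.1 hlt hyi.2.1 hx (h ▸ hx) h
  · exact hT.2 y x c hyi.1 hlt hxi.2.1 (h ▸ hx) hx h.symm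

theorem apply_mem_valuesBelow_iff (hT : ColInj w T) {r a c : ℕ} (hr : T r c ≠ 0) :
    T r c ∈ valuesBelow T a c ↔ r < a := by
  rw [mem_valuesBelow]
  constructor
  · rintro ⟨x, -, hxa, hx⟩
    exact hT.eq_of_apply_eq hr hx.symm ▸ hxa
  · exact fun hra => ⟨r, ((hT.1 r c).1 hr).1, hra, rfl⟩

end ColInj

theorem IncrementAt.exists_swap {n : ℕ} {w : Equiv.Perm (Fin n)} {T T' : ℕ → ℕ → ℕ} {i j : ℕ}
    (hT : ColInj w T) (hij : IsInv w i j) (hinc : IncrementAt T T' i j) :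
    ∃ b, T i j < b ∧ Ioo (T i j) b ⊆ valuesBelow T i j ∧ b ∉ valuesBelow T i j ∧
      (∀ r, T' r j = swap (T i j) b (T r j)) ∧ ∀ r c, c ≠ j → T' r c = T r c := by
  obtain ⟨b, hab, hgap, hbelow, hcase⟩ := hinc
  have hTij : T i j ≠ 0 := (hT.1 i j).2 hij
  have hne_left : ∀ r, r ≠ i → T r j ≠ T i j := fun r hr h =>
    hr (hT.eq_of_apply_eq (h ▸ hTij) h)
  refine ⟨b, hab, fun k hk => mem_valuesBelow.2 (hgap k (mem_Ioo.1 hk).1 (mem_Ioo.1 hk).2),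
    fun hb => ?_, fun r => ?_, fun r c hc => ?_⟩
  · obtain ⟨x, hx1, hxi, hx⟩ := mem_valuesBelow.1 hb
    exact hbelow x hx1 hxi hx
  · rcases hcase with ⟨habsent, rfl⟩ | ⟨i'', -, hi'', rfl⟩
    · rcases eq_or_ne r i with rfl | hri
      · simp
      have hrb : T r j ≠ b := fun h =>
        habsent r ((hT.1 r j).1 (by omega)).1 h
      simp [hri, swap_apply_of_ne_of_ne (hne_left r hri) hrb]
    · rcases eq_or_ne r i with rfl | hri
      · simp
      rcases eq_or_ne r i'' with rfl | hri''
      · simp [hri, hi'']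
      have hrb : T r j ≠ b := fun h => hri'' (hT.eq_of_apply_eq (by omega) (h.trans hi''.symm))
      simp [hri, hri'', swap_apply_of_ne_of_ne (hne_left r hri) hrb]
  · rcases hcase with ⟨-, rfl⟩ | ⟨i'', -, -, rfl⟩ <;> simp [hc]

section SwapColumn

variable {n : ℕ} {w : Equiv.Perm (Fin n)} {T T' : ℕ → ℕ → ℕ} {i j b : ℕ}

theorem lehmer_swap_self (hT : ColInj w T) (hij : IsInv w i j) (hab : T i j < b)
    (hgap : Ioo (T i j) b ⊆ valuesBelow T i j) (hb : b ∉ valuesBelow T i j)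
    (hswap : ∀ r, T' r j = swap (T i j) b (T r j)) :
    lehmer T' i j = lehmer T i j + 1 := by
  have hTij : T i j ≠ 0 := (hT.1 i j).2 hij
  have hnotin : T i j ∉ valuesBelow T i j := by
    rw [hT.apply_mem_valuesBelow_iff hTij]; exact lt_irrefl i
  rw [lehmer_eq_card_sdiff_image_swap hswap, swap_apply_left,
    image_swap_eq_self (iff_of_false hnotin hb), lehmer_eq_card_sdiff,
    card_Ico_sdiff_of_Ioo_subset (by omega) hab hgap, if_neg hnotin]

theorem lehmer_swap_of_ne (hT : ColInj w T) (hij : IsInv w i j) (hab : T i j < b)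
    (hgap : Ioo (T i j) b ⊆ valuesBelow T i j) (hb : b ∉ valuesBelow T i j)
    (hswap : ∀ r, T' r j = swap (T i j) b (T r j))
    {a : ℕ} (haj : IsInv w a j) (hai : a ≠ i) :
    lehmer T' a j = lehmer T a j := by
  have hTij : T i j ≠ 0 := (hT.1 i j).2 hij
  have hTaj : T a j ≠ 0 := (hT.1 a j).2 haj
  have hne : T a j ≠ T i j := fun h => hai (hT.eq_of_apply_eq hTaj h)
  have hmem_iff : T i j ∈ valuesBelow T a j ↔ i < a := hT.apply_mem_valuesBelow_iff hTij
  rw [lehmer_eq_card_sdiff_image_swap hswap, lehmer_eq_card_sdiff]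
  by_cases heb : T a j = b
  · have hia : i < a := by
      by_contra h
      exact hb (heb ▸ (hT.apply_mem_valuesBelow_iff hTaj).2 (by omega))
    rw [heb, swap_apply_right, card_sdiff_image_swap _ (by simp only [mem_Ico]; omega),
      card_Ico_sdiff_of_Ioo_subset (by omega) hab (hgap.trans (valuesBelow_mono j hia.le)),
      if_pos (hmem_iff.2 hia), add_zero]
  rw [swap_apply_of_ne_of_ne hne heb]
  rcases lt_or_gt_of_ne hai with hai | hia
  · rw [image_swap_eq_self (iff_of_false (mt hmem_iff.1 (by omega))
      (fun h => hb (valuesBelow_mono j hai.le h)))]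
  · have hout : T a j ∉ Ioo (T i j) b := fun h =>
      absurd ((hT.apply_mem_valuesBelow_iff hTaj).1 (hgap h)) (by omega)
    rw [mem_Ioo] at hout
    exact card_sdiff_image_swap _ (by simp only [mem_Ico]; omega)

end SwapColumn

/-- Incrementing box `(i,j)` of a column-injective tableau for `w`
adds `1` to the entry of the Lehmer form in box `(i,j)` and leaves all other
entries of the Lehmer form unchanged. -/
theorem lehmer_increment {n : ℕ} (w : Equiv.Perm (Fin n)) (T T' : ℕ → ℕ → ℕ)
    (i j : ℕ) (hT : ColInj w T) (hij : IsInv w i j) (hinc : IncrementAt T T' i j) :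
    lehmer T' i j = lehmer T i j + 1 ∧
      ∀ a b, IsInv w a b → (a, b) ≠ (i, j) → lehmer T' a b = lehmer T a b := by
  obtain ⟨b, hab, hgap, hb, hswap, hother⟩ := hinc.exists_swap hT hij
  refine ⟨lehmer_swap_self hT hij hab hgap hb hswap, fun a c hac hne => ?_⟩
  by_cases hc : c = j
  · subst hc
    exact lehmer_swap_of_ne hT hij hab hgap hb hswap hac fun h => hne (h ▸ rfl)
  · exact lehmer_congr_column (hother · c hc) a
end
end

section
/- Let T, T' be column-injective tableaux for w ∈ S_n with T' = ↑_M T for a multiset M of boxes, and fix a box (i,j). Let R be the set of positive integers r with r < i, T(r,j) < T(i,j), and T'(r,j) > T'(i,j). Then |R| ≥ T(i,j) − T'(i,j); moreover, if (i,j) does not occur in M, then |R| = T(i,j) − T'(i,j). -/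
open Classical

noncomputable section

/-!
Fix the box `(i,j)` and follow the potential `T(i,j) + #{r < i : T(r,j) > T(i,j)}` along the
increments producing `T'`. Increments outside column `j` do not affect it, and none in column `j`
lowers it: incrementing `(i,j)` itself raises it by one; a trade moving `T(i,j) = b` to a row
`p < i` lowers `T(i,j)` by `b - T(p,j)`, while row `p` and the `b - T(p,j) - 1` rows `r < p`
holding the values in between start to exceed it; any other increment leaves the set of rows
exceeding `(i,j)` unchanged, or, when `T(i,j) = 0`, does not shrink it in size. Comparing the
potentials of `T` and `T'` gives the inequality. If `(i,j)` is never incremented, the potential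
stays constant and a row exceeding `(i,j)` keeps doing so, which gives the equality.
-/

open Finset

/-- Both kinds of `IncrementAt`, seen in one column `f`: row `p` is raised from `f p` to `b`, and
an occurrence of `b` in a row `r > p` (the partner of a trade) is lowered to `f p`. -/
structure ColIncrement (f g : ℕ → ℕ) (p b : ℕ) : Prop where
  one_le : 1 ≤ p
  lt : f p < b
  exists_of_mem_Ioo : ∀ k, f p < k → k < b → ∃ r, 1 ≤ r ∧ r < p ∧ f r = k
  ne_of_lt : ∀ r, 1 ≤ r → r < p → f r ≠ b
  apply_self : g p = b
  apply_of_ne : ∀ r, 1 ≤ r → r ≠ p → g r = if f r = b then f p else f r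

def rowsExceeding (f : ℕ → ℕ) (i c : ℕ) : Finset ℕ :=
  (Ico 1 i).filter (c < f ·)

def potential (f : ℕ → ℕ) (i : ℕ) : ℕ :=
  f i + #(rowsExceeding f i (f i))

theorem rowsExceeding_congr {f g : ℕ → ℕ} {i c : ℕ} (h : ∀ r, 1 ≤ r → r < i → g r = f r) :
    rowsExceeding g i c = rowsExceeding f i c :=
  filter_congr fun r hr => by rw [h r (mem_Ico.1 hr).1 (mem_Ico.1 hr).2]

theorem card_rowsExceeding_eq {f : ℕ → ℕ} {P a b : ℕ}
    (hf : Set.InjOn f {r | 1 ≤ r ∧ f r ≠ 0}) (hab : a < b)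
    (hwit : ∀ k, a < k → k < b → ∃ r, 1 ≤ r ∧ r < P ∧ f r = k)
    (hb : ∀ r, 1 ≤ r → r < P → f r ≠ b) :
    #(rowsExceeding f P a) = #(rowsExceeding f P b) + (b - a - 1) := by
  have hbetween : #((rowsExceeding f P a).filter (f · < b)) = b - a - 1 := by
    rw [← Nat.card_Ioo]
    refine card_nbij f (fun r hr => ?_) (fun r hr r' hr' h => ?_) (fun k hk => ?_)
    · simp only [rowsExceeding, mem_coe, mem_filter, mem_Ico] at hr
      simp only [coe_Ioo, Set.mem_Ioo]
      omega
    · simp only [rowsExceeding, mem_coe, mem_filter, mem_Ico] at hr hr'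
      exact hf ⟨hr.1.1.1, by omega⟩ ⟨hr'.1.1.1, by omega⟩ h
    · simp only [coe_Ioo, Set.mem_Ioo] at hk
      obtain ⟨r, hr, hrP, rfl⟩ := hwit k hk.1 hk.2
      exact ⟨r, by simp [rowsExceeding, hr, hrP, hk.1, hk.2], rfl⟩
  have habove : (rowsExceeding f P a).filter (fun r => ¬ f r < b) = rowsExceeding f P b := by
    ext r
    simp only [rowsExceeding, mem_filter, mem_Ico]
    have := hb r
    omega
  rw [← card_filter_add_card_filter_not (s := rowsExceeding f P a) (f · < b), hbetween, habove,
    add_comm]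

theorem filter_lt_and_lt_eq_sdiff {f g : ℕ → ℕ} {i : ℕ}
    (hf : Set.InjOn f {r | 1 ≤ r ∧ f r ≠ 0}) (hi : 1 ≤ i) (hfi : f i ≠ 0) :
    (Ico 1 i).filter (fun r => f r < f i ∧ g i < g r) =
      rowsExceeding g i (g i) \ rowsExceeding f i (f i) := by
  ext r
  simp only [rowsExceeding, mem_filter, mem_sdiff, mem_Ico]
  constructor
  · rintro ⟨hr, hlt, hgt⟩
    exact ⟨⟨hr, hgt⟩, fun h => by omega⟩
  · rintro ⟨⟨hr, hgt⟩, hnot⟩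
    have : f r ≠ f i := fun heq => hr.2.ne (hf ⟨hr.1, heq ▸ hfi⟩ ⟨hi, hfi⟩ heq)
    exact ⟨hr, by omega, hgt⟩

namespace ColIncrement

variable {f g : ℕ → ℕ} {p b i : ℕ}

theorem apply_eq (h : ColIncrement f g p b) {r : ℕ} (hr : 1 ≤ r) (hrp : r ≠ p) (hrb : f r ≠ b) :
    g r = f r := by
  rw [h.apply_of_ne r hr hrp, if_neg hrb]

theorem apply_of_lt (h : ColIncrement f g p b) {r : ℕ} (hr : 1 ≤ r) (hrp : r < p) : g r = f r :=
  h.apply_eq hr hrp.ne (h.ne_of_lt r hr hrp)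

theorem injOn (h : ColIncrement f g p b) (hf : Set.InjOn f {r | 1 ≤ r ∧ f r ≠ 0}) :
    Set.InjOn g {r | 1 ≤ r ∧ g r ≠ 0} := by
  have hlt := h.lt
  have hne_b : ∀ r, 1 ≤ r → r ≠ p → g r ≠ b := fun r hr hrp => by
    rw [h.apply_of_ne r hr hrp]; split_ifs with hrb <;> omega
  rintro r ⟨hr, hr0⟩ r' ⟨hr', hr0'⟩ heq
  rcases eq_or_ne r p with rfl | hrp
  · by_contra hrr'
    exact hne_b r' hr' (Ne.symm hrr') (heq ▸ h.apply_self)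
  rcases eq_or_ne r' p with rfl | hr'p
  · exact absurd (heq.trans h.apply_self) (hne_b r hr hrp)
  rw [h.apply_of_ne r hr hrp] at heq hr0
  rw [h.apply_of_ne r' hr' hr'p] at heq hr0'
  split_ifs at heq hr0 hr0' with hrb hr'b
  · exact hf ⟨hr, by omega⟩ ⟨hr', by omega⟩ (hrb.trans hr'b.symm)
  · exact absurd (hf ⟨h.one_le, hr0⟩ ⟨hr', hr0'⟩ heq).symm hr'p
  · exact absurd (hf ⟨hr, hr0⟩ ⟨h.one_le, hr0'⟩ heq) hrp
  · exact hf ⟨hr, hr0⟩ ⟨hr', hr0'⟩ heq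

theorem rowsExceeding_eq_of_lt (h : ColIncrement f g p b) (hip : i < p) (c : ℕ) :
    rowsExceeding g i c = rowsExceeding f i c :=
  rowsExceeding_congr fun _ hr hri => h.apply_of_lt hr (hri.trans hip)

theorem potential_self (h : ColIncrement f g p b) (hf : Set.InjOn f {r | 1 ≤ r ∧ f r ≠ 0}) :
    potential g p = potential f p + 1 := by
  have hEx : rowsExceeding g p b = rowsExceeding f p b :=
    rowsExceeding_congr fun _ hr hrp => h.apply_of_lt hr hrp
  have hcount := card_rowsExceeding_eq hf h.lt h.exists_of_mem_Ioo h.ne_of_lt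
  have hlt := h.lt
  simp only [potential, h.apply_self, hEx, hcount]
  omega

theorem eq_zero_of_le_of_lt (h : ColIncrement f g p b) (hf : Set.InjOn f {r | 1 ≤ r ∧ f r ≠ 0})
    (hpi : p < i) (hpi_le : f p ≤ f i) (hib_lt : f i < b) : f i = 0 := by
  by_contra hi0
  rcases hpi_le.lt_or_eq with hlt | heq
  · obtain ⟨r, hr, hrp, hri⟩ := h.exists_of_mem_Ioo _ hlt hib_lt
    have := hf ⟨hr, hri ▸ hi0⟩ ⟨by omega, hi0⟩ hri
    omega
  · exact hpi.ne (hf ⟨h.one_le, heq ▸ hi0⟩ ⟨by omega, hi0⟩ heq)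

theorem rowsExceeding_eq_of_not_mem_Ico (h : ColIncrement f g p b) {c : ℕ}
    (hc : ¬(f p ≤ c ∧ c < b)) (i : ℕ) : rowsExceeding g i c = rowsExceeding f i c := by
  have hlt := h.lt
  refine filter_congr fun r hr => ?_
  rcases eq_or_ne r p with rfl | hrp
  · rw [h.apply_self]; omega
  rw [h.apply_of_ne r (mem_Ico.1 hr).1 hrp]
  split_ifs with hrb
  · rw [hrb]; omega
  · rfl

/-- The partner of a trade may lose its nonzero entry, but then row `p` gains one. -/
theorem card_rowsExceeding_zero_le (h : ColIncrement f g p b)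
    (hf : Set.InjOn f {r | 1 ≤ r ∧ f r ≠ 0}) (hpi : p < i) (hp0 : f p = 0) :
    #(rowsExceeding f i 0) ≤ #(rowsExceeding g i 0) := by
  have hlt := h.lt
  have hp1 := h.one_le
  refine card_le_card_of_injOn (fun r => if f r = b then p else r) (fun r hr => ?_)
    (fun r hr r' hr' heq => ?_)
  · simp only [rowsExceeding, mem_coe, mem_filter, mem_Ico] at hr ⊢
    split_ifs with hrb
    · simp only [h.apply_self]; omega
    · rw [h.apply_eq hr.1.1 (by rintro rfl; omega) hrb]; exact hr
  · simp only [rowsExceeding, mem_coe, mem_filter, mem_Ico] at hr hr'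
    dsimp only at heq
    split_ifs at heq with hrb hr'b
    · exact hf ⟨hr.1.1, by omega⟩ ⟨hr'.1.1, by omega⟩ (hrb.trans hr'b.symm)
    · subst heq; omega
    · subst heq; omega
    · exact heq

theorem potential_eq_of_partner (h : ColIncrement f g p b)
    (hf : Set.InjOn f {r | 1 ≤ r ∧ f r ≠ 0}) (hpi : p < i) (hib : f i = b) :
    g i = f p ∧ rowsExceeding f i (f i) ⊆ rowsExceeding g i (g i) ∧
      potential g i = potential f i := by
  have hlt := h.lt
  have hp1 := h.one_le
  have hne : ∀ r, 1 ≤ r → r < i → f r ≠ b := fun r hr hri hrb =>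
    hri.ne (hf ⟨hr, by omega⟩ ⟨by omega, by omega⟩ (hrb.trans hib.symm))
  have hgi : g i = f p := by rw [h.apply_of_ne i (by omega) hpi.ne', if_pos hib]
  have hEx : rowsExceeding g i (f p) = insert p (rowsExceeding f i (f p)) := by
    ext r
    simp only [rowsExceeding, mem_insert, mem_filter, mem_Ico]
    rcases eq_or_ne r p with rfl | hrp
    · simp [h.apply_self, hp1, hpi, hlt]
    by_cases hr : 1 ≤ r ∧ r < i
    · rw [h.apply_eq hr.1 hrp (hne r hr.1 hr.2)]; tauto
    · tauto
  have hp_notin : p ∉ rowsExceeding f i (f p) := by simp [rowsExceeding]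
  have hcount := card_rowsExceeding_eq hf hlt
    (fun k hk hkb => (h.exists_of_mem_Ioo k hk hkb).imp fun r hr => ⟨hr.1, by omega, hr.2.2⟩) hne
  refine ⟨hgi, fun r hr => ?_, ?_⟩
  · rw [hgi, hEx]
    simp only [rowsExceeding, mem_insert, mem_filter, mem_Ico] at hr ⊢
    omega
  · simp only [potential, hgi, hEx, card_insert_of_notMem hp_notin, hcount, hib]
    omega

theorem potential_le (h : ColIncrement f g p b) (hf : Set.InjOn f {r | 1 ≤ r ∧ f r ≠ 0})
    (hi : 1 ≤ i) : potential f i ≤ potential g i := by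
  rcases lt_trichotomy i p with hip | rfl | hpi
  · rw [potential, potential, h.apply_of_lt hi hip, h.rowsExceeding_eq_of_lt hip]
  · rw [h.potential_self hf]; omega
  by_cases hib : f i = b
  · exact (h.potential_eq_of_partner hf hpi hib).2.2.ge
  have hgi : g i = f i := h.apply_eq hi hpi.ne' hib
  by_cases hcross : f p ≤ f i ∧ f i < b
  · have hi0 := h.eq_zero_of_le_of_lt hf hpi hcross.1 hcross.2
    simp only [potential, hgi, hi0, zero_add]
    exact h.card_rowsExceeding_zero_le hf hpi (by omega)
  · rw [potential, potential, hgi, h.rowsExceeding_eq_of_not_mem_Ico hcross]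

theorem potential_eq_of_ne (h : ColIncrement f g p b) (hf : Set.InjOn f {r | 1 ≤ r ∧ f r ≠ 0})
    (hi : 1 ≤ i) (hpi : p ≠ i) (hgi : 0 < g i) :
    g i ≤ f i ∧ rowsExceeding f i (f i) ⊆ rowsExceeding g i (g i) ∧
      potential g i = potential f i := by
  by_cases hpart : p < i ∧ f i = b
  · obtain ⟨hgi', hsub, hpot⟩ := h.potential_eq_of_partner hf hpart.1 hpart.2
    have := h.lt
    exact ⟨by omega, hsub, hpot⟩
  obtain ⟨hgi', hEx⟩ : g i = f i ∧ rowsExceeding g i (f i) = rowsExceeding f i (f i) := by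
    rcases hpi.lt_or_gt with hpi | hip
    · have hgi' := h.apply_eq hi hpi.ne' fun hib => hpart ⟨hpi, hib⟩
      refine ⟨hgi', h.rowsExceeding_eq_of_not_mem_Ico (fun hc => ?_) i⟩
      have := h.eq_zero_of_le_of_lt hf hpi hc.1 hc.2
      omega
    · exact ⟨h.apply_of_lt hi hip, h.rowsExceeding_eq_of_lt hip _⟩
  rw [potential, potential, hgi', hEx]
  exact ⟨le_rfl, subset_rfl, rfl⟩

end ColIncrement

namespace IncrementAt

variable {S S' : ℕ → ℕ → ℕ} {p q j : ℕ}

theorem apply_eq_of_ne (h : IncrementAt S S' p q) (hqj : q ≠ j) (r : ℕ) : S' r j = S r j := by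
  obtain ⟨b, -, -, -, ⟨-, rfl⟩ | ⟨p₂, -, -, rfl⟩⟩ := h <;> simp [hqj.symm]

theorem colIncrement (h : IncrementAt S S' p j) (hp : 1 ≤ p)
    (hf : Set.InjOn (S · j) {r | 1 ≤ r ∧ S r j ≠ 0}) : ∃ b, ColIncrement (S · j) (S' · j) p b := by
  obtain ⟨b, hab, hwit, hnb, ⟨hpure, rfl⟩ | ⟨p₂, hpp₂, hb, rfl⟩⟩ := h
  · exact ⟨b, hp, hab, hwit, hnb, by simp, fun r hr hrp => by simp [hrp, hpure r hr]⟩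
  refine ⟨b, hp, hab, hwit, hnb, by simp, fun r hr hrp => ?_⟩
  rcases eq_or_ne r p₂ with rfl | hrp₂
  · simp [hrp, hb]
  · have hrb : S r j ≠ b := fun hrb =>
      hrp₂ (hf ⟨hr, by omega⟩ ⟨by omega, by omega⟩ (hrb.trans hb.symm))
    simp [hrp, hrp₂, hrb]

theorem apply_zero_le (h : IncrementAt S S' p q) (j : ℕ) : S 0 j ≤ S' 0 j := by
  obtain ⟨b, hab, -, -, ⟨-, rfl⟩ | ⟨p₂, hpp₂, -, rfl⟩⟩ := h <;>
    dsimp only <;> split_ifs with h1 <;> grind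

theorem apply_zero_lt (h : IncrementAt S S' 0 j) : S 0 j < S' 0 j := by
  obtain ⟨b, hab, -, -, ⟨-, rfl⟩ | ⟨p₂, hpp₂, -, rfl⟩⟩ := h <;> simpa using hab

end IncrementAt

namespace IncBy

theorem apply_zero_le {M : Multiset (ℕ × ℕ)} {S T : ℕ → ℕ → ℕ} (h : IncBy M S T) (j : ℕ) :
    S 0 j ≤ T 0 j := by
  induction h with
  | nil => rfl
  | cons hstep _ ih => exact (hstep.apply_zero_le j).trans ih

theorem one_le_of_mem {M : Multiset (ℕ × ℕ)} {S T : ℕ → ℕ → ℕ} (h : IncBy M S T) {j : ℕ}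
    (hT : T 0 j = 0) {p : ℕ} (hp : (p, j) ∈ M) : 1 ≤ p := by
  induction h with
  | nil => simp at hp
  | cons hstep htail ih =>
    rcases Multiset.mem_cons.1 hp with hp | hp
    · obtain ⟨rfl, rfl⟩ := Prod.ext_iff.1 hp
      by_contra hp0
      obtain rfl : p = 0 := by omega
      have := hstep.apply_zero_lt.trans_le (htail.apply_zero_le j)
      omega
    · exact ih hT hp

variable {M : Multiset (ℕ × ℕ)} {S T : ℕ → ℕ → ℕ} {i j : ℕ}

theorem potential_le (h : IncBy M S T) (hT : T 0 j = 0)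
    (hf : Set.InjOn (S · j) {r | 1 ≤ r ∧ S r j ≠ 0}) (hi : 1 ≤ i) :
    potential (S · j) i ≤ potential (T · j) i := by
  induction h with
  | nil => rfl
  | cons hstep htail ih =>
    rename_i p q
    rcases eq_or_ne q j with rfl | hqj
    · obtain ⟨b, hb⟩ := hstep.colIncrement
        ((cons hstep htail).one_le_of_mem hT (Multiset.mem_cons_self _ _)) hf
      exact (hb.potential_le hf hi).trans (ih hT (hb.injOn hf))
    · simpa only [hstep.apply_eq_of_ne hqj] using
        ih hT (by simpa only [hstep.apply_eq_of_ne hqj] using hf)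

theorem potential_eq_of_not_mem (h : IncBy M S T) (hT : T 0 j = 0)
    (hf : Set.InjOn (S · j) {r | 1 ≤ r ∧ S r j ≠ 0}) (hi : 1 ≤ i) (hij : (i, j) ∉ M)
    (hTi : 0 < T i j) :
    T i j ≤ S i j ∧ rowsExceeding (S · j) i (S i j) ⊆ rowsExceeding (T · j) i (T i j) ∧
      potential (T · j) i = potential (S · j) i := by
  induction h with
  | nil => exact ⟨le_rfl, subset_rfl, rfl⟩
  | cons hstep htail ih =>
    rename_i p q
    have hij' := fun hmem => hij (Multiset.mem_cons_of_mem hmem)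
    rcases eq_or_ne q j with rfl | hqj
    · obtain ⟨b, hb⟩ := hstep.colIncrement
        ((cons hstep htail).one_le_of_mem hT (Multiset.mem_cons_self _ _)) hf
      have hpi : p ≠ i := by rintro rfl; exact hij (Multiset.mem_cons_self _ _)
      obtain ⟨hle, hsub, hpot⟩ := ih hT (hb.injOn hf) hij' hTi
      obtain ⟨hle', hsub', hpot'⟩ := hb.potential_eq_of_ne hf hi hpi (hTi.trans_le hle)
      exact ⟨hle.trans hle', hsub'.trans hsub, hpot.trans hpot'⟩
    · simpa only [hstep.apply_eq_of_ne hqj] using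
        ih hT (by simpa only [hstep.apply_eq_of_ne hqj] using hf) hij' hTi

end IncBy

theorem ColInj.injOn {n : ℕ} {w : Equiv.Perm (Fin n)} {T : ℕ → ℕ → ℕ} (hT : ColInj w T)
    (j : ℕ) : Set.InjOn (T · j) {r | 1 ≤ r ∧ T r j ≠ 0} := by
  rintro r ⟨hr, hr0⟩ r' ⟨hr', hr0'⟩ heq
  rcases lt_trichotomy r r' with h | h | h
  · exact absurd heq (hT.2 r r' j hr h ((hT.1 r' j).1 hr0').2.1 hr0 hr0')
  · exact h
  · exact absurd heq.symm (hT.2 r' r j hr' h ((hT.1 r j).1 hr0).2.1 hr0' hr0)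

theorem ColInj.apply_zero {n : ℕ} {w : Equiv.Perm (Fin n)} {T : ℕ → ℕ → ℕ} (hT : ColInj w T)
    (j : ℕ) : T 0 j = 0 :=
  not_not.1 fun h => by simpa using ((hT.1 0 j).1 h).1

/-- Counting rows `r < i` with `T(r,j) < T(i,j)` and `T'(r,j) > T'(i,j)`,
there are at least `T(i,j) − T'(i,j)` of them, with equality if `(i,j)` is not in `M`. -/
theorem card_ge_of_incBy {n : ℕ} (w : Equiv.Perm (Fin n)) (T T' : ℕ → ℕ → ℕ)
    (hT : ColInj w T) (hT' : ColInj w T') (M : Multiset (ℕ × ℕ))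
    (hM : IncBy M T T') (i j : ℕ) :
    (T i j : ℤ) - (T' i j : ℤ) ≤
        (((Finset.Ico 1 i).filter fun r => T r j < T i j ∧ T' i j < T' r j).card : ℤ) ∧
      ((i, j) ∉ M →
        ((((Finset.Ico 1 i).filter fun r => T r j < T i j ∧ T' i j < T' r j).card : ℤ)
          = (T i j : ℤ) - (T' i j : ℤ))) := by
  by_cases hTi : T i j = 0
  · have hT'i : T' i j = 0 := not_not.1 fun h => (hT.1 i j).2 ((hT'.1 i j).1 h) hTi
    simp [hTi, hT'i]
  have hinv := (hT.1 i j).1 hTi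
  have hT'i : 0 < T' i j := Nat.pos_of_ne_zero ((hT'.1 i j).2 hinv)
  have hf := hT.injOn j
  have hT'0 := hT'.apply_zero j
  have hle := hM.potential_le hT'0 hf hinv.1
  simp only [potential] at hle
  have hR : (Ico 1 i).filter (fun r => T r j < T i j ∧ T' i j < T' r j) =
      rowsExceeding (T' · j) i (T' i j) \ rowsExceeding (T · j) i (T i j) :=
    filter_lt_and_lt_eq_sdiff (g := (T' · j)) hf hinv.1 hTi
  rw [hR]
  refine ⟨?_, fun hij => ?_⟩
  · have := le_card_sdiff (rowsExceeding (T · j) i (T i j)) (rowsExceeding (T' · j) i (T' i j))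
    omega
  · obtain ⟨-, hsub, hpot⟩ := hM.potential_eq_of_not_mem hT'0 hf hinv.1 hij hT'i
    simp only [potential] at hpot
    have := card_le_card hsub
    rw [card_sdiff_of_subset hsub]
    omega
end
end

section
/- Let T, T' be inversions tableaux for w ∈ S_n that agree in all columns other than column n, and suppose T' = ↑_M T for some multiset M of boxes in column n. Then T(i,j) ≤ T'(i,j) for all (i,j) ∈ Δ_{n-1}. -/
open Classical

noncomputable section

/-! Fix a threshold `t` and count the rows of a column whose entry is at least `t`. Increments
never decrease this count: a pure increment raises one entry, and a trade only moves the larger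
of two values to the higher row. Now if `T' i n < t := T i n`, balancedness of the Λ-shapes
`Λ(s,i,n)` and `Λ(i,s,n)`, whose entries outside column `n` are the same in `T` and `T'`, shows
that every row counted for `T'` is counted for `T`, while row `i` is lost: the count drops. -/

def rowsAtLeast (T : ℕ → ℕ → ℕ) (c t N : ℕ) : Finset ℕ :=
  (Finset.range N).filter fun s => t ≤ T s c

lemma card_rowsAtLeast_le_of_le {T T' : ℕ → ℕ → ℕ} {c : ℕ} (h : ∀ s, T s c ≤ T' s c)
    (t N : ℕ) : (rowsAtLeast T c t N).card ≤ (rowsAtLeast T' c t N).card :=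
  Finset.card_le_card <| Finset.monotone_filter_right _ fun s _ hs => hs.trans (h s)

lemma card_rowsAtLeast_le_of_trade {T T' : ℕ → ℕ → ℕ} {c i i'' : ℕ} (hii : i < i'')
    (hlt : T i c < T i'' c) (hi : T' i c = T i'' c) (hi'' : T' i'' c = T i c)
    (hother : ∀ s, s ≠ i → s ≠ i'' → T' s c = T s c) (t N : ℕ) :
    (rowsAtLeast T c t N).card ≤ (rowsAtLeast T' c t N).card := by
  by_cases hta : t ≤ T i c
  · refine Finset.card_le_card fun s hs => ?_
    simp only [rowsAtLeast, Finset.mem_filter] at hs ⊢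
    refine ⟨hs.1, ?_⟩
    by_cases hsi : s = i
    · subst hsi; omega
    by_cases hsi'' : s = i''
    · subst hsi''; omega
    · rw [hother s hsi hsi'']; exact hs.2
  · refine Finset.card_le_card_of_injOn (fun s => if s = i'' then i else s) (fun s hs => ?_)
      (fun s₁ hs₁ s₂ hs₂ heq => ?_)
    · simp only [rowsAtLeast, Finset.coe_filter, Set.mem_ofPred_eq, Finset.mem_range] at hs ⊢
      have hsi : s ≠ i := by rintro rfl; omega
      split_ifs with hsi''
      · subst hsi''; omega
      · rw [hother s hsi hsi'']; exact hs
    · simp only [rowsAtLeast, Finset.coe_filter, Set.mem_ofPred_eq] at hs₁ hs₂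
      have h₁ : s₁ ≠ i := by rintro rfl; omega
      have h₂ : s₂ ≠ i := by rintro rfl; omega
      simp only at heq
      split_ifs at heq <;> omega

lemma IncrementAt.card_rowsAtLeast_le {T T' : ℕ → ℕ → ℕ} {i j : ℕ} (h : IncrementAt T T' i j)
    (c t N : ℕ) : (rowsAtLeast T c t N).card ≤ (rowsAtLeast T' c t N).card := by
  obtain ⟨b, hab, -, -, ⟨-, rfl⟩ | ⟨i'', hii, hb, rfl⟩⟩ := h
  · refine card_rowsAtLeast_le_of_le (fun s => ?_) t N
    split_ifs with hs
    · obtain ⟨rfl, rfl⟩ := hs; exact hab.le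
    · exact le_rfl
  · by_cases hjc : j = c
    · subst hjc
      exact card_rowsAtLeast_le_of_trade hii (hb ▸ hab) (by simp [hb]) (by simp [hii.ne'])
        (fun s hsi hsi'' => by simp [hsi, hsi'']) t N
    · exact card_rowsAtLeast_le_of_le (fun s => by simp [Ne.symm hjc]) t N

lemma IncBy.card_rowsAtLeast_le {M : Multiset (ℕ × ℕ)} {T T' : ℕ → ℕ → ℕ} (h : IncBy M T T')
    (c t N : ℕ) : (rowsAtLeast T c t N).card ≤ (rowsAtLeast T' c t N).card := by
  induction h with
  | nil => exact le_rfl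
  | cons hstep _ ih => exact (hstep.card_rowsAtLeast_le c t N).trans ih

lemma BalancedTab.le_of_agree_of_lt {n : ℕ} {T T' : ℕ → ℕ → ℕ} (hT : BalancedTab n T)
    (hT' : BalancedTab n T') (hagree : ∀ i j, j ≠ n → T i j = T' i j) {i s : ℕ}
    (hi : 1 ≤ i) (hs : 1 ≤ s) (hin : i < n) (hsn : s < n) (hsi : s ≠ i)
    (hlt : T' i n < T i n) (hge : T i n ≤ T' s n) : T i n ≤ T s n := by
  rcases lt_or_gt_of_ne hsi with hsi | hsi
  · have h := hT s i n hs hsi hin le_rfl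
    have h' := hT' s i n hs hsi hin le_rfl
    have := hagree s i hin.ne
    unfold LBal at h h'
    omega
  · have h := hT i s n hi hsi hsn le_rfl
    have h' := hT' i s n hi hsi hsn le_rfl
    have := hagree i s hsn.ne
    unfold LBal at h h'
    omega

theorem le_of_incBy_lastCol_general {n : ℕ} (w : Equiv.Perm (Fin n)) (T T' : ℕ → ℕ → ℕ)
    (hT : InvTab w T) (hT' : InvTab w T')
    (hagree : ∀ i j, j ≠ n → T i j = T' i j)
    (M : Multiset (ℕ × ℕ)) (hM : IncBy M T T') :
    ∀ i j, 1 ≤ i → i < j → j ≤ n → T i j ≤ T' i j := by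
  intro i j hi hij hjn
  rcases eq_or_ne j n with rfl | hj
  swap
  · exact (hagree i j hj).le
  by_contra! hlt
  have hmem : i ∈ rowsAtLeast T j (T i j) j := by simp [rowsAtLeast, hij]
  have hsub : rowsAtLeast T' j (T i j) j ⊆ (rowsAtLeast T j (T i j) j).erase i := by
    intro s hs
    simp only [rowsAtLeast, Finset.mem_erase, Finset.mem_filter, Finset.mem_range] at hs ⊢
    have hs0 : 1 ≤ s := by
      by_contra! h0
      obtain rfl : s = 0 := by omega
      have := hT'.2.2 0 j
      omega
    have hsi : s ≠ i := by rintro rfl; omega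
    exact ⟨hsi, hs.1, hT.2.1.le_of_agree_of_lt hT'.2.1 hagree hi hs0 hij hs.1 hsi hlt hs.2⟩
  have hcard := (Finset.card_le_card hsub).trans_lt (Finset.card_erase_lt_of_mem hmem)
  exact (hM.card_rowsAtLeast_le j (T i j) j).not_gt hcard

/-- If two inversions tableaux for `w` agree outside column `n` and one is
obtained from the other by incrementing boxes of column `n`, the entries only grow. -/
theorem le_of_incBy_lastCol {n : ℕ} (w : Equiv.Perm (Fin n)) (T T' : ℕ → ℕ → ℕ)
    (hT : InvTab w T) (hT' : InvTab w T')
    (hagree : ∀ i j, j ≠ n → T i j = T' i j)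
    (M : Multiset (ℕ × ℕ)) (hMcol : ∀ p ∈ M, p.2 = n) (hM : IncBy M T T') :
    ∀ i j, 1 ≤ i → i < j → j ≤ n → T i j ≤ T' i j :=
  le_of_incBy_lastCol_general w T T' hT hT' hagree M hM
end
end

section
/- For every permutation w ∈ S_n and reduced pipe dreams P₁, P₂ ∈ PD(w), if P₁ ≤_chute P₂ then Φ(P₁) ≤ Φ(P₂) in the componentwise order on Lehmer tableaux. -/
open Classical

noncomputable section

/-! ## Pipe dreams

A pipe dream in the staircase `Δ_n` is encoded by `P : ℕ → ℕ → Bool`, where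
`P i j = true` means box `(i,j)` (row `i` from the top, column `j` from the left,
with `1 ≤ i, j` and `i + j ≤ n`) is a cross tile, and `false` means a bump tile;
boxes on the southeast boundary (`i + j = n + 1`) are elbow tiles. -/

/-- `labels n P i j` is the pair (label of the north edge, label of the east edge) of
the pipes passing through box `(i,j)`:  pipes enter at row `k` on the west side with
label `k` and propagate through cross, bump and elbow tiles. -/
def labels (n : ℕ) (P : ℕ → ℕ → Bool) (i j : ℕ) : ℕ × ℕ :=
  let west := if _h1 : j ≤ 1 then i else (labels n P i (j - 1)).2
  if _h : i + j ≤ n then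
    if P i j then ((labels n P (i + 1) j).1, west)
    else (west, (labels n P (i + 1) j).1)
  else (west, west)
termination_by (n + 1 - i) + j
decreasing_by all_goals omega

def northLabel (n : ℕ) (P : ℕ → ℕ → Bool) (i j : ℕ) : ℕ := (labels n P i j).1

def westLabel (n : ℕ) (P : ℕ → ℕ → Bool) (i j : ℕ) : ℕ :=
  if j ≤ 1 then i else (labels n P i (j - 1)).2

def southLabel (n : ℕ) (P : ℕ → ℕ → Bool) (i j : ℕ) : ℕ := (labels n P (i + 1) j).1

/-- Pipes `p` and `q` cross at box `(i,j)` of `P`. -/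
def CrossAt (n : ℕ) (P : ℕ → ℕ → Bool) (i j p q : ℕ) : Prop :=
  1 ≤ i ∧ 1 ≤ j ∧ i + j ≤ n ∧ P i j = true ∧
    ((westLabel n P i j = p ∧ southLabel n P i j = q) ∨
      (westLabel n P i j = q ∧ southLabel n P i j = p))

/-- `P` is a pipe dream for `w`: crosses lie in the staircase, and reading the pipe
labels along the north side gives the one-line notation of `w`. -/
def IsPD {n : ℕ} (w : Equiv.Perm (Fin n)) (P : ℕ → ℕ → Bool) : Prop :=
  (∀ i j, P i j = true → 1 ≤ i ∧ 1 ≤ j ∧ i + j ≤ n) ∧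
    ∀ j, 1 ≤ j → j ≤ n → northLabel n P 1 j = permVal w j

/-- `P` is reduced: no two pipes cross more than once. -/
def Reduced (n : ℕ) (P : ℕ → ℕ → Bool) : Prop :=
  ∀ p q i j i' j', CrossAt n P i j p q → CrossAt n P i' j' p q → i = i' ∧ j = j'

/-- The set of reduced pipe dreams for `w`. -/
def RPD {n : ℕ} (w : Equiv.Perm (Fin n)) :=
  { P : ℕ → ℕ → Bool // IsPD w P ∧ Reduced n P }

/-- `R` is a rectangle (rows `a < b`, columns `c < d`) in which a chute move of `P`
can take place: `NW(R)=(a,c)` and `SW(R)=(b,c)` are bumps, `SE(R)=(b,d)` is a bump or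
elbow, and all other boxes of `R` are crosses. -/
def IsChuteRect (n : ℕ) (P : ℕ → ℕ → Bool) (a b c d : ℕ) : Prop :=
  1 ≤ a ∧ a < b ∧ 1 ≤ c ∧ c < d ∧ b + d ≤ n + 1 ∧
    P a c = false ∧ P b c = false ∧ P b d = false ∧
    ∀ i j, a ≤ i → i ≤ b → c ≤ j → j ≤ d →
      ¬(i = a ∧ j = c) → ¬(i = b ∧ j = c) → ¬(i = b ∧ j = d) → P i j = true

/-- The result of the chute move in the rectangle with corners `(a,c)`, `(b,d)`:
the bump at `SW=(b,c)` becomes a cross and the cross at `NE=(a,d)` becomes a bump. -/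
def chuteResult (P : ℕ → ℕ → Bool) (a b c d : ℕ) : ℕ → ℕ → Bool :=
  fun i j => if i = b ∧ j = c then true else if i = a ∧ j = d then false else P i j

/-- `P'` is obtained from `P` by a single chute move. -/
def ChuteStep (n : ℕ) (P P' : ℕ → ℕ → Bool) : Prop :=
  ∃ a b c d, IsChuteRect n P a b c d ∧ P' = chuteResult P a b c d

/-- The chute move order on `RPD w`: `P ≤ Q` iff `Q` is obtained from `P`
by a sequence of chute moves. -/
def chuteLE {n : ℕ} (w : Equiv.Perm (Fin n)) (P Q : RPD w) : Prop :=
  Relation.ReflTransGen (fun X Y : RPD w => ChuteStep n X.1 Y.1) P Q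

/-- `theta n P p q` is the index of the row in which pipes `p` and `q` cross in `P`
(`0` if they do not cross).  For `P ∈ PD(w)` reduced, `theta n P` is the inversions
tableau `Θ(P)`. -/
def theta (n : ℕ) (P : ℕ → ℕ → Bool) (p q : ℕ) : ℕ :=
  if h : ∃ rc : ℕ × ℕ, CrossAt n P rc.1 rc.2 p q then (Classical.choose h).1 else 0

/-- The Lehmer tableau `Φ(P) = Λ(Θ(P))` of a pipe dream. -/
def phi (n : ℕ) (P : ℕ → ℕ → Bool) (i j : ℕ) : ℕ := lehmer (theta n P) i j

/-- Cover relation of the chute move order. -/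
def chuteCovBy {n : ℕ} (w : Equiv.Perm (Fin n)) (P Q : RPD w) : Prop :=
  chuteLE w P Q ∧ P ≠ Q ∧ ∀ R, chuteLE w P R → chuteLE w R Q → R = P ∨ R = Q

/-- The interval `[P, Q]` in the chute move order. -/
def chuteIcc {n : ℕ} (w : Equiv.Perm (Fin n)) (P Q : RPD w) : Set (RPD w) :=
  { R | chuteLE w P R ∧ chuteLE w R Q }

/-- A chain in the chute move order. -/
def chuteChain {n : ℕ} (w : Equiv.Perm (Fin n)) (C : Set (RPD w)) : Prop :=
  ∀ x ∈ C, ∀ y ∈ C, chuteLE w x y ∨ chuteLE w y x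

/-- `[P,Q]` is a polygon: an interval of cardinality at least 4 that is the union of
two chains whose intersection is `{P, Q}`. -/
def IsPolygon {n : ℕ} (w : Equiv.Perm (Fin n)) (P Q : RPD w) : Prop :=
  chuteLE w P Q ∧ 4 ≤ (chuteIcc w P Q).ncard ∧
    ∃ C₁ C₂ : Set (RPD w), chuteChain w C₁ ∧ chuteChain w C₂ ∧
      C₁ ∪ C₂ = chuteIcc w P Q ∧ C₁ ∩ C₂ = {P, Q}

/-- `m` is the meet (greatest lower bound) of `P` and `Q` in the chute move order. -/
def IsMeetOf {n : ℕ} (w : Equiv.Perm (Fin n)) (m P Q : RPD w) : Prop :=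
  chuteLE w m P ∧ chuteLE w m Q ∧ ∀ r, chuteLE w r P → chuteLE w r Q → chuteLE w r m

/-- `s` is the join (least upper bound) of `P` and `Q` in the chute move order. -/
def IsJoinOf {n : ℕ} (w : Equiv.Perm (Fin n)) (s P Q : RPD w) : Prop :=
  chuteLE w P s ∧ chuteLE w Q s ∧ ∀ r, chuteLE w P r → chuteLE w Q r → chuteLE w s r



/-!
A chute move only changes crossings inside its rectangle `[a, b] × [c, d]`. Let `s` and `t` be
the pipes meeting at the south-west corner `(b, c)` and `v_j` the pipe running up column
`c < j < d`. The crossings of `s` with `t` and with `v_j` move from row `a` to row `b`, the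
crossings of `t` with `v_j` move from row `b` to row `a`, and every other pair of pipes keeps its
crossing row. In a reduced pipe dream the pipe entering a cross from the west is the smaller one,
so `s < t < v_j`. Hence column `t` of `Θ` has one entry raised from `a` to `b`, and column `v_j`
has the entries `a`, `b` of rows `s < t` exchanged, where every value strictly between `a` and
`b` already occurs above row `s` (the pipes entering rows `a < k < b` cross `v_j` there). Neither
operation lowers a Lehmer count, and the theorem follows by induction along chute moves.
-/

def eastLabel (n : ℕ) (P : ℕ → ℕ → Bool) (i j : ℕ) : ℕ := (labels n P i j).2

section Labels

variable {n : ℕ} {P : ℕ → ℕ → Bool}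

theorem labels_eq (i j : ℕ) : labels n P i j =
    if i + j ≤ n then
      (if P i j then (southLabel n P i j, westLabel n P i j)
       else (westLabel n P i j, southLabel n P i j))
    else (westLabel n P i j, westLabel n P i j) := by
  rw [labels]; simp only [westLabel, southLabel]; split <;> rfl

theorem westLabel_one (i : ℕ) : westLabel n P i 1 = i := by simp [westLabel]

theorem westLabel_succ (i : ℕ) {j : ℕ} (h : 1 ≤ j) :
    westLabel n P i (j + 1) = eastLabel n P i j := by
  simp only [westLabel, eastLabel, add_tsub_cancel_right]; split_ifs <;> first | rfl | omega

theorem southLabel_eq (i j : ℕ) : southLabel n P i j = northLabel n P (i + 1) j := rfl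

theorem northLabel_of_outside {i j : ℕ} (h : n < i + j) :
    northLabel n P i j = westLabel n P i j := by
  rw [northLabel, labels_eq, if_neg (by omega)]

theorem northLabel_of_cross {i j : ℕ} (h : i + j ≤ n) (hc : P i j = true) :
    northLabel n P i j = southLabel n P i j := by
  rw [northLabel, labels_eq]; simp [h, hc]

theorem eastLabel_of_cross {i j : ℕ} (h : i + j ≤ n) (hc : P i j = true) :
    eastLabel n P i j = westLabel n P i j := by
  rw [eastLabel, labels_eq]; simp [h, hc]

theorem northLabel_of_bump {i j : ℕ} (h : i + j ≤ n) (hc : P i j = false) :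
    northLabel n P i j = westLabel n P i j := by
  rw [northLabel, labels_eq]; simp [h, hc]

theorem eastLabel_of_bump {i j : ℕ} (h : i + j ≤ n) (hc : P i j = false) :
    eastLabel n P i j = southLabel n P i j := by
  rw [eastLabel, labels_eq]; simp [h, hc]

theorem northLabel_of_not_cross {i j : ℕ} (hc : P i j = false) :
    northLabel n P i j = westLabel n P i j := by
  by_cases h : i + j ≤ n
  · exact northLabel_of_bump h hc
  · exact northLabel_of_outside (by omega)

theorem cons_northLabel_eastLabel {i j : ℕ} (h : i + j ≤ n) (M : Multiset ℕ) :
    northLabel n P i j ::ₘ eastLabel n P i j ::ₘ M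
      = westLabel n P i j ::ₘ southLabel n P i j ::ₘ M := by
  cases hc : P i j
  · rw [northLabel_of_bump h hc, eastLabel_of_bump h hc]
  · rw [northLabel_of_cross h hc, eastLabel_of_cross h hc, Multiset.cons_swap]

theorem row_le_labels (i j : ℕ) : i ≤ (labels n P i j).1 ∧ i ≤ (labels n P i j).2 := by
  have hwest : i ≤ westLabel n P i j := by
    unfold westLabel
    split
    · exact le_rfl
    · exact (row_le_labels i (j - 1)).2
  rw [labels_eq]
  split
  · have hsouth : i ≤ southLabel n P i j := by
      have := (row_le_labels (i + 1) j).1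
      rw [southLabel]; omega
    split <;> exact ⟨by assumption, by assumption⟩
  · exact ⟨hwest, hwest⟩
termination_by (n + 1 - i) + j
decreasing_by all_goals omega

theorem row_le_westLabel (i j : ℕ) : i ≤ westLabel n P i j := by
  unfold westLabel; split
  · exact le_rfl
  · exact (row_le_labels i (j - 1)).2

theorem row_le_northLabel (i j : ℕ) : i ≤ northLabel n P i j := (row_le_labels i j).1

theorem row_lt_southLabel (i j : ℕ) : i < southLabel n P i j :=
  row_le_northLabel (i + 1) j

end Labels

section Permutation

variable {n : ℕ} {P : ℕ → ℕ → Bool}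

/-- West labels of the lowest `k` boxes `(n + 1 - j - s, j)`, `s < k`, of column `j`. -/
def colWestLabels (n : ℕ) (P : ℕ → ℕ → Bool) (j k : ℕ) : Multiset ℕ :=
  (Multiset.range k).map fun s => westLabel n P (n + 1 - j - s) j

def topLabels (n : ℕ) (P : ℕ → ℕ → Bool) (m : ℕ) : Multiset ℕ :=
  (Multiset.range m).map fun s => northLabel n P 1 (s + 1)

theorem colWestLabels_succ_eq {j k : ℕ} (hk : k + j ≤ n) :
    colWestLabels n P j (k + 1) =
      northLabel n P (n + 1 - j - k) j ::ₘ
        (Multiset.range k).map fun s => eastLabel n P (n - j - s) j := by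
  induction k with
  | zero =>
    simp only [colWestLabels, Multiset.range_succ, Multiset.range_zero, Multiset.map_cons,
      Multiset.map_zero]
    rw [northLabel_of_outside (by omega)]
  | succ k ih =>
    have hrow : n + 1 - j - (k + 1) = n - j - k := by omega
    rw [colWestLabels, Multiset.range_succ, Multiset.map_cons, ← colWestLabels, ih (by omega),
      hrow, show n + 1 - j - k = n - j - k + 1 by omega, ← southLabel_eq,
      ← cons_northLabel_eastLabel (by omega), Multiset.range_succ, Multiset.map_cons]

theorem colWestLabels_eq_cons {j : ℕ} (hj : 1 ≤ j) (hjn : j ≤ n) :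
    colWestLabels n P j (n + 1 - j) = northLabel n P 1 j ::ₘ colWestLabels n P (j + 1) (n - j) := by
  rw [show n + 1 - j = n - j + 1 by omega, colWestLabels_succ_eq (by omega),
    show n + 1 - j - (n - j) = 1 by omega, colWestLabels]
  congr 1
  refine Multiset.map_congr rfl fun s _ => ?_
  rw [show n + 1 - (j + 1) - s = n - j - s by omega, westLabel_succ _ hj]

/-- The pipes `1, …, n` are those entering column `j` from the west together with those that
left through the top of an earlier column. -/
theorem colWestLabels_add_topLabels {j : ℕ} (hj : 1 ≤ j) (hjn : j ≤ n + 1) :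
    colWestLabels n P j (n + 1 - j) + topLabels n P (j - 1) =
      (Multiset.range n).map fun s => n - s := by
  induction j with
  | zero => omega
  | succ j ih =>
    rcases Nat.eq_zero_or_pos j with rfl | hj1
    · rw [show 0 + 1 - 1 = 0 by rfl, topLabels, Multiset.range_zero, Multiset.map_zero, add_zero,
        colWestLabels]
      exact Multiset.map_congr rfl fun s _ => by
        rw [show n + 1 - (0 + 1) - s = n - s by omega, westLabel_one]
    · rw [← ih hj1 (by omega), colWestLabels_eq_cons hj1 (by omega),
        show j + 1 - 1 = j - 1 + 1 by omega, topLabels, Multiset.range_succ, Multiset.map_cons,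
        show j - 1 + 1 = j by omega, show n + 1 - (j + 1) = n - j by omega, ← topLabels,
        Multiset.cons_add, Multiset.add_cons]

theorem nodup_colWestLabels_add_topLabels {j : ℕ} (hj : 1 ≤ j) (hjn : j ≤ n + 1) :
    (colWestLabels n P j (n + 1 - j) + topLabels n P (j - 1)).Nodup := by
  rw [colWestLabels_add_topLabels hj hjn]
  exact (Multiset.nodup_range n).map_on fun x hx y hy h => by
    rw [Multiset.mem_range] at hx hy; omega

theorem westLabel_mem_colWestLabels {j u : ℕ} (hu : 1 ≤ u) (hun : u + j ≤ n + 1) :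
    westLabel n P u j ∈ colWestLabels n P j (n + 1 - j) :=
  Multiset.mem_map.2 ⟨n + 1 - j - u, Multiset.mem_range.2 (by omega), by congr 1; omega⟩

theorem westLabel_injective_col {j u v : ℕ} (hj : 1 ≤ j) (hu : 1 ≤ u) (hun : u + j ≤ n + 1)
    (hv : 1 ≤ v) (hvn : v + j ≤ n + 1) (h : westLabel n P u j = westLabel n P v j) :
    u = v := by
  have hnd : (colWestLabels n P j (n + 1 - j)).Nodup :=
    Multiset.nodup_of_le (Multiset.le_add_right _ _)
      (nodup_colWestLabels_add_topLabels hj (by omega))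
  have := Multiset.inj_on_of_nodup_map hnd (n + 1 - j - u)
    (Multiset.mem_range.2 (by omega)) (n + 1 - j - v) (Multiset.mem_range.2 (by omega))
    (by rw [show n + 1 - j - (n + 1 - j - u) = u by omega,
      show n + 1 - j - (n + 1 - j - v) = v by omega]; exact h)
  omega

theorem westLabel_le {j u : ℕ} (hj : 1 ≤ j) (hu : 1 ≤ u) (hun : u + j ≤ n + 1) :
    westLabel n P u j ≤ n := by
  have hmem : westLabel n P u j ∈ (Multiset.range n).map fun s => n - s := by
    rw [← colWestLabels_add_topLabels hj (by omega)]
    exact Multiset.mem_add.2 (Or.inl (westLabel_mem_colWestLabels hu hun))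
  obtain ⟨s, -, hs⟩ := Multiset.mem_map.1 hmem
  omega

theorem northLabel_one_ne_westLabel {c j u : ℕ} (hc : 1 ≤ c) (hcj : c < j) (hu : 1 ≤ u)
    (hun : u + j ≤ n + 1) : northLabel n P 1 c ≠ westLabel n P u j := by
  intro h
  have hnd := Multiset.nodup_add.1 (nodup_colWestLabels_add_topLabels (P := P) (by omega)
    (show j ≤ n + 1 by omega))
  refine Multiset.disjoint_left.1 hnd.2.2 (westLabel_mem_colWestLabels hu hun) ?_
  rw [← h]
  exact Multiset.mem_map.2 ⟨c - 1, Multiset.mem_range.2 (by omega), by congr 1; omega⟩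

def rowNorthLabels (n : ℕ) (P : ℕ → ℕ → Bool) (i k : ℕ) : Multiset ℕ :=
  (Multiset.range k).map fun s => northLabel n P i (s + 1)

theorem westLabel_cons_rowNorthLabels {i m : ℕ} (h : i + m ≤ n) :
    westLabel n P i (m + 1) ::ₘ rowNorthLabels n P i m =
      i ::ₘ rowNorthLabels n P (i + 1) m := by
  induction m with
  | zero => simp [rowNorthLabels, westLabel_one]
  | succ m ih =>
    rw [westLabel_succ _ (by omega), rowNorthLabels, Multiset.range_succ, Multiset.map_cons,
      ← rowNorthLabels, Multiset.cons_swap, cons_northLabel_eastLabel (by omega),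
      Multiset.cons_swap, ih (by omega), Multiset.cons_swap, rowNorthLabels, rowNorthLabels,
      Multiset.range_succ, Multiset.map_cons, southLabel_eq]

theorem rowNorthLabels_eq_cons {i : ℕ} (hin : i ≤ n) :
    rowNorthLabels n P i (n + 1 - i) = i ::ₘ rowNorthLabels n P (i + 1) (n - i) := by
  rw [← westLabel_cons_rowNorthLabels (by omega), show n + 1 - i = n - i + 1 by omega,
    rowNorthLabels, Multiset.range_succ, Multiset.map_cons, ← rowNorthLabels,
    northLabel_of_outside (by omega)]

theorem nodup_rowNorthLabels (i : ℕ) : (rowNorthLabels n P i (n + 1 - i)).Nodup := by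
  by_cases hin : i ≤ n
  · rw [rowNorthLabels_eq_cons hin, Multiset.nodup_cons]
    refine ⟨fun hmem => ?_, by
      simpa [show n + 1 - (i + 1) = n - i by omega] using nodup_rowNorthLabels (i + 1)⟩
    obtain ⟨s, -, hs⟩ := Multiset.mem_map.1 hmem
    have := row_le_northLabel (n := n) (P := P) (i + 1) (s + 1)
    omega
  · simp [rowNorthLabels, show n + 1 - i = 0 by omega]
termination_by n + 1 - i

theorem northLabel_injective_row {i y y' : ℕ} (hy : 1 ≤ y) (hyn : y ≤ n + 1 - i)
    (hy' : 1 ≤ y') (hy'n : y' ≤ n + 1 - i) (h : northLabel n P i y = northLabel n P i y') :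
    y = y' := by
  have := Multiset.inj_on_of_nodup_map (nodup_rowNorthLabels (n := n) (P := P) i) (y - 1)
    (Multiset.mem_range.2 (by omega)) (y' - 1) (Multiset.mem_range.2 (by omega))
    (by rw [show y - 1 + 1 = y by omega, show y' - 1 + 1 = y' by omega]; exact h)
  omega

end Permutation

section Reduced

variable {n : ℕ} {P : ℕ → ℕ → Bool}

theorem exists_westLabel_eq_northLabel {r j : ℕ} (hrj : r + j ≤ n + 1) :
    ∃ v, r ≤ v ∧ v + j ≤ n + 1 ∧ westLabel n P v j = northLabel n P r j := by
  by_cases hin : r + j ≤ n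
  · cases hc : P r j
    · exact ⟨r, le_rfl, hrj, (northLabel_of_bump hin hc).symm⟩
    · obtain ⟨v, hv, hvj, hw⟩ :=
        exists_westLabel_eq_northLabel (by omega : r + 1 + j ≤ n + 1)
      exact ⟨v, by omega, hvj, by rw [hw, northLabel_of_cross hin hc, southLabel_eq]⟩
  · exact ⟨r, le_rfl, hrj, (northLabel_of_outside (by omega)).symm⟩
termination_by n + 1 - r

/-- Pipe `q` runs vertically through the boxes of column `j` strictly between rows `e` and `r`. -/
def VerticalRun (n : ℕ) (P : ℕ → ℕ → Bool) (j e r q : ℕ) : Prop :=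
  ∀ i, e < i → i < r → P i j = true ∧ southLabel n P i j = q

/-- Followed upwards from row `r`, the pipe leaving box `(r, j)` to the north either leaves the
staircase at the top of column `j` or turns east at a bump in a row `e < r`. -/
theorem northLabel_climb {j : ℕ} (hj : 1 ≤ j) {r q : ℕ} (hr : 1 ≤ r) (hrj : r + j ≤ n + 1)
    (hq : northLabel n P r j = q) :
    (northLabel n P 1 j = q ∧ VerticalRun n P j 0 r q) ∨
    (∃ e, 1 ≤ e ∧ e < r ∧ P e j = false ∧ westLabel n P e (j + 1) = q ∧
      VerticalRun n P j e r q) := by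
  induction r, hr using Nat.le_induction generalizing q with
  | base => exact Or.inl ⟨hq, fun i hi1 hi2 => by omega⟩
  | succ r hr ih =>
    have hsq : southLabel n P r j = q := hq
    have extend : ∀ e, VerticalRun n P j e r q → P r j = true → e < r →
        VerticalRun n P j e (r + 1) q := fun e hrun hc her i hi1 hi2 => by
      rcases Nat.lt_or_ge i r with h | h
      · exact hrun i hi1 h
      · obtain rfl : i = r := by omega
        exact ⟨hc, hsq⟩
    cases hc : P r j
    · refine Or.inr ⟨r, hr, by omega, hc, ?_, fun i hi1 hi2 => by omega⟩
      rw [westLabel_succ _ hj, eastLabel_of_bump (by omega) hc, hsq]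
    · have hnr : northLabel n P r j = q := by rw [northLabel_of_cross (by omega) hc, hsq]
      rcases ih (by omega) hnr with ⟨htop, hrun⟩ | ⟨e, he1, her, hbump, heast, hrun⟩
      · exact Or.inl ⟨htop, extend 0 hrun hc (by omega)⟩
      · exact Or.inr ⟨e, he1, by omega, hbump, heast, extend e hrun hc her⟩

theorem westLabel_exit {j v y : ℕ} (hj : 1 ≤ j) (hv : 1 ≤ v) (hvn : v + j ≤ n + 1)
    (hw : westLabel n P v j = y) :
    (P v j = true ∧ v + j ≤ n ∧ westLabel n P v (j + 1) = y) ∨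
    ((v + j ≤ n → P v j = false) ∧
      ∃ e, 1 ≤ e ∧ e < v ∧ P e j = false ∧ westLabel n P e (j + 1) = y ∧
        VerticalRun n P j e v y) ∨
    ((v + j ≤ n → P v j = false) ∧ northLabel n P 1 j = y ∧ VerticalRun n P j 0 v y) := by
  by_cases hin : v + j ≤ n
  · cases hc : P v j
    · rcases northLabel_climb hj hv hvn (by rw [northLabel_of_bump hin hc, hw]) with
        htop | hturn
      · exact Or.inr (Or.inr ⟨fun _ => rfl, htop⟩)
      · exact Or.inr (Or.inl ⟨fun _ => rfl, hturn⟩)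
    · exact Or.inl ⟨rfl, hin, by rw [westLabel_succ _ hj, eastLabel_of_cross hin hc, hw]⟩
  · have hPf : v + j ≤ n → P v j = false := fun h => absurd h hin
    rcases northLabel_climb hj hv hvn (by rw [northLabel_of_outside (by omega), hw]) with
      htop | hturn
    · exact Or.inr (Or.inr ⟨hPf, htop⟩)
    · exact Or.inr (Or.inl ⟨hPf, hturn⟩)

theorem westLabel_order_succ {j u v x y : ℕ} (hj : 1 ≤ j) (hu : 1 ≤ u) (huv : u < v)
    (hvn : v + j ≤ n + 1) (hx : westLabel n P u j = x) (hy : westLabel n P v j = y)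
    (hnc : ∀ i, ¬ CrossAt n P i j x y) :
    northLabel n P 1 j = x ∨
    ∃ u' v', 1 ≤ u' ∧ u' < v' ∧ v' + (j + 1) ≤ n + 1 ∧
      westLabel n P u' (j + 1) = x ∧ westLabel n P v' (j + 1) = y := by
  have hun : u + j ≤ n := by omega
  have no_cross_at_u : P u j = true → ¬ southLabel n P u j = y := fun hc hs =>
    hnc u ⟨hu, hj, hun, hc, Or.inl ⟨hx, hs⟩⟩
  rcases westLabel_exit hj hu (by omega) hx with
    ⟨hxc, -, hxe⟩ | ⟨hxf, e, he1, heu, -, hxe, -⟩ | ⟨-, htop, -⟩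
  · rcases westLabel_exit hj (by omega) hvn hy with
      ⟨-, hyn, hye⟩ | ⟨-, e', -, he'v, hbump, hye, hrun⟩ | ⟨-, -, hrun⟩
    · exact Or.inr ⟨u, v, hu, huv, by omega, hxe, hye⟩
    · rcases Nat.lt_trichotomy e' u with h | rfl | h
      · exact absurd (hrun u h huv).2 (no_cross_at_u hxc)
      · rw [hbump] at hxc; cases hxc
      · exact Or.inr ⟨u, e', hu, h, by omega, hxe, hye⟩
    · exact absurd (hrun u (by omega) huv).2 (no_cross_at_u hxc)
  · have hxb : P u j = false := hxf hun
    rcases westLabel_exit hj (by omega) hvn hy with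
      ⟨-, hyn, hye⟩ | ⟨-, e', -, he'v, -, hye, hrun⟩ | ⟨-, -, hrun⟩
    · exact Or.inr ⟨e, v, he1, by omega, by omega, hxe, hye⟩
    · rcases Nat.lt_or_ge e' u with h | h
      · rw [(hrun u h huv).1] at hxb; cases hxb
      · exact Or.inr ⟨e, e', he1, by omega, by omega, hxe, hye⟩
    · rw [(hrun u (by omega) huv).1] at hxb; cases hxb
  · exact Or.inl htop

theorem westLabel_order_of_no_cross {j x y : ℕ} (hy : 1 ≤ y) (hyx : y < x) (hxn : x ≤ n)
    (hnc : ∀ i c, c < j → ¬ CrossAt n P i c y x)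
    (htop : ∀ c, 1 ≤ c → c < j → northLabel n P 1 c ≠ y) :
    ∀ c, 1 ≤ c → c ≤ j → ∃ u v, 1 ≤ u ∧ u < v ∧ v + c ≤ n + 1 ∧
      westLabel n P u c = y ∧ westLabel n P v c = x := by
  intro c hc hcj
  induction c, hc using Nat.le_induction with
  | base => exact ⟨y, x, hy, hyx, by omega, westLabel_one y, westLabel_one x⟩
  | succ c hc ih =>
    obtain ⟨u, v, hu, huv, hvn, hwu, hwv⟩ := ih (by omega)
    rcases westLabel_order_succ hc hu huv hvn hwu hwv (fun i => hnc i c (by omega)) with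
      hexit | hnext
    · exact absurd hexit (htop c hc (by omega))
    · exact hnext

theorem westLabel_lt_southLabel_of_crossAt (hred : Reduced n P) {i j p q : ℕ}
    (hc : CrossAt n P i j p q) : westLabel n P i j < southLabel n P i j := by
  obtain ⟨hi, hj, hijn, hPc, -⟩ := hc
  set x := westLabel n P i j with hx
  set y := southLabel n P i j with hy
  have hcross : CrossAt n P i j y x := ⟨hi, hj, hijn, hPc, Or.inr ⟨rfl, rfl⟩⟩
  obtain ⟨v, hiv, hvn, hwv⟩ :=
    exists_westLabel_eq_northLabel (n := n) (P := P) (r := i + 1) (j := j) (by omega)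
  rw [← southLabel_eq, ← hy] at hwv
  have hxy : x ≠ y := fun h => by
    have := westLabel_injective_col hj hi (by omega) (by omega) hvn
      (hx.symm.trans (h.trans hwv.symm))
    omega
  -- Otherwise `y` stays above `x` in every column up to `j`, yet enters column `j` below row `i`.
  by_contra hle
  have hyx : y < x := by omega
  obtain ⟨u', v', hu', huv', hv'n, hwu', hwv'⟩ := westLabel_order_of_no_cross
    (j := j) (P := P) (by have := row_lt_southLabel (n := n) (P := P) i j; omega) hyx
    (westLabel_le hj hi (by omega))
    (fun i' c hcj hc' => by have := (hred y x i' c i j hc' hcross).2; omega)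
    (fun c hc hcj h => northLabel_one_ne_westLabel hc hcj (by omega) hvn (h.trans hwv.symm))
    j hj le_rfl
  have := westLabel_injective_col hj hu' (by omega) (by omega) hvn (hwu'.trans hwv.symm)
  have := westLabel_injective_col hj (by omega) (by omega) hi (by omega) (hwv'.trans hx)
  omega

end Reduced

section Runs

variable {n : ℕ} {P : ℕ → ℕ → Bool}

theorem labels_congr {P' : ℕ → ℕ → Bool} {i j : ℕ}
    (h : ∀ i' j', i ≤ i' → j' ≤ j → P i' j' = P' i' j') :
    labels n P i j = labels n P' i j := by
  have hwest : westLabel n P i j = westLabel n P' i j := by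
    unfold westLabel
    split
    · rfl
    · rw [labels_congr fun i' j' h1 h2 => h i' j' h1 (by omega)]
  rw [labels_eq, labels_eq (P := P'), hwest]
  split
  · have hsouth : southLabel n P i j = southLabel n P' i j := by
      unfold southLabel
      rw [labels_congr fun i' j' h1 h2 => h i' j' (by omega) h2]
    rw [hsouth, h i j le_rfl le_rfl]
  · rfl
termination_by (n + 1 - i) + j
decreasing_by all_goals omega

theorem northLabel_eq_of_vertical_crosses {j r r₀ : ℕ} (hr : r ≤ r₀) (hr₀ : r₀ + j ≤ n + 1)
    (hcross : ∀ i, r ≤ i → i < r₀ → P i j = true) :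
    northLabel n P r j = northLabel n P r₀ j := by
  induction r₀, hr using Nat.le_induction with
  | base => rfl
  | succ r₀ hr ih =>
    rw [ih (by omega) fun i h1 h2 => hcross i h1 (by omega),
      northLabel_of_cross (by omega) (hcross r₀ hr (by omega)), southLabel_eq]

theorem westLabel_eq_of_horizontal_crosses {i j₀ j : ℕ} (hj₀ : 1 ≤ j₀) (hj : j₀ < j)
    (hij : i + j ≤ n + 1) (hcross : ∀ j', j₀ < j' → j' < j → P i j' = true) :
    westLabel n P i j = eastLabel n P i j₀ := by
  induction j, hj using Nat.le_induction with
  | base => exact westLabel_succ i hj₀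
  | succ j hj ih =>
    rw [westLabel_succ i (by omega), eastLabel_of_cross (by omega) (hcross j hj (by omega)),
      ih (by omega) fun j' h1 h2 => hcross j' h1 (by omega)]

end Runs

section Theta

variable {n : ℕ} {P : ℕ → ℕ → Bool}

theorem crossAt_iff {i j p q : ℕ} : CrossAt n P i j p q ↔
    (1 ≤ i ∧ 1 ≤ j ∧ i + j ≤ n ∧ P i j = true) ∧
      s(p, q) = s(westLabel n P i j, southLabel n P i j) := by
  simp only [CrossAt, Sym2.eq_iff, and_assoc, eq_comm]
  tauto

theorem theta_eq_of_crossAt (hred : Reduced n P) {i j p q : ℕ} (h : CrossAt n P i j p q) :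
    theta n P p q = i := by
  have hex : ∃ rc : ℕ × ℕ, CrossAt n P rc.1 rc.2 p q := ⟨(i, j), h⟩
  rw [theta, dif_pos hex]
  exact (hred p q _ _ i j (Classical.choose_spec hex) h).1

theorem exists_crossAt_of_theta_ne_zero {p q : ℕ} (h : theta n P p q ≠ 0) :
    ∃ j, CrossAt n P (theta n P p q) j p q := by
  by_cases hex : ∃ rc : ℕ × ℕ, CrossAt n P rc.1 rc.2 p q
  · rw [theta, dif_pos hex]
    exact ⟨_, Classical.choose_spec hex⟩
  · rw [theta, dif_neg hex] at h
    exact absurd rfl h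

theorem theta_eq_of_forall_exists_crossAt_iff {P' : ℕ → ℕ → Bool} (hred : Reduced n P)
    (hred' : Reduced n P') {p q : ℕ}
    (h : ∀ i, (∃ j, CrossAt n P i j p q) ↔ ∃ j, CrossAt n P' i j p q) :
    theta n P' p q = theta n P p q := by
  by_cases hex : ∃ rc : ℕ × ℕ, CrossAt n P rc.1 rc.2 p q
  · obtain ⟨⟨i, j⟩, hc⟩ := hex
    obtain ⟨j', hc'⟩ := (h i).1 ⟨j, hc⟩
    rw [theta_eq_of_crossAt hred hc, theta_eq_of_crossAt hred' hc']
  · have hex' : ¬ ∃ rc : ℕ × ℕ, CrossAt n P' rc.1 rc.2 p q := fun ⟨⟨i, j⟩, hc'⟩ =>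
      let ⟨j', hc⟩ := (h i).2 ⟨j, hc'⟩
      hex ⟨(i, j'), hc⟩
    rw [theta, theta, dif_neg hex, dif_neg hex']

theorem westLabel_eq_of_crossAt_of_southLabel_eq (hred : Reduced n P) {i y y' p q : ℕ}
    (hc : CrossAt n P i y p q) (hpq : p < q) (hy' : 1 ≤ y') (hiy' : i + y' ≤ n)
    (hs : southLabel n P i y' = q) : westLabel n P i y' = p := by
  have hlt := westLabel_lt_southLabel_of_crossAt hred hc
  obtain ⟨hi, hy, hiy, -, ⟨hw, hs'⟩ | ⟨hw, hs'⟩⟩ := hc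
  · obtain rfl : y = y' := northLabel_injective_row hy (by omega) hy' (by omega)
      (hs'.trans hs.symm)
    exact hw
  · omega

theorem eq_westLabel_of_theta_eq (hred : Reduced n P) {i y x q : ℕ} (hi : 1 ≤ i) (hy : 1 ≤ y)
    (hiy : i + y ≤ n) (hs : southLabel n P i y = q) (hxq : x < q) (hθ : theta n P x q = i) :
    x = westLabel n P i y := by
  obtain ⟨j, hx⟩ := exists_crossAt_of_theta_ne_zero (n := n) (P := P) (p := x) (q := q) (by omega)
  rw [hθ] at hx
  exact (westLabel_eq_of_crossAt_of_southLabel_eq hred hx hxq hy hiy hs).symm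

end Theta

section ChuteResult

variable {n : ℕ} {P : ℕ → ℕ → Bool} {a b c d : ℕ}

theorem chuteResult_southWest : chuteResult P a b c d b c = true := by simp [chuteResult]

theorem chuteResult_northEast (hab : a < b) : chuteResult P a b c d a d = false := by
  simp [chuteResult]; omega

theorem chuteResult_of_ne {i j : ℕ} (h1 : ¬(i = b ∧ j = c)) (h2 : ¬(i = a ∧ j = d)) :
    chuteResult P a b c d i j = P i j := by
  simp only [chuteResult, if_neg h1, if_neg h2]

theorem labels_chuteResult_of_lt_row (hab : a < b) {i : ℕ} (h : b < i) (j : ℕ) :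
    labels n (chuteResult P a b c d) i j = labels n P i j :=
  labels_congr fun _ _ h1 _ => chuteResult_of_ne (by omega) (by omega)

theorem labels_chuteResult_of_lt_col (hcd : c < d) (i : ℕ) {j : ℕ} (h : j < c) :
    labels n (chuteResult P a b c d) i j = labels n P i j :=
  labels_congr fun _ _ _ h2 => chuteResult_of_ne (by omega) (by omega)

theorem westLabel_chuteResult_left (hcd : c < d) (r : ℕ) :
    westLabel n (chuteResult P a b c d) r c = westLabel n P r c := by
  unfold westLabel
  split
  · rfl
  · rw [labels_chuteResult_of_lt_col hcd r (by omega)]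

theorem northLabel_chuteResult_below (hab : a < b) (j : ℕ) :
    northLabel n (chuteResult P a b c d) (b + 1) j = northLabel n P (b + 1) j := by
  rw [northLabel, labels_chuteResult_of_lt_row hab (by omega), northLabel]

end ChuteResult

theorem Finset.card_le_card_of_exchange {α : Type*} [DecidableEq α] {A B : Finset α} {a b : α}
    (ha : a ∉ A) (hsub : A.erase b ⊆ B) (hab : b ∈ A → a ∈ B) : A.card ≤ B.card := by
  by_cases hb : b ∈ A
  · have hins : insert a (A.erase b) ⊆ B := Finset.insert_subset (hab hb) hsub
    have := Finset.card_le_card hins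
    rwa [Finset.card_insert_of_notMem fun h => ha (Finset.mem_of_mem_erase h),
      Finset.card_erase_add_one hb] at this
  · rw [Finset.erase_eq_of_notMem hb] at hsub
    exact Finset.card_le_card hsub

section Lehmer

def colLehmer (f : ℕ → ℕ) (i : ℕ) : ℕ :=
  ((Finset.Ico 1 (f i)).filter fun k => ∀ i', 1 ≤ i' → i' < i → f i' ≠ k).card

theorem lehmer_eq_colLehmer (T : ℕ → ℕ → ℕ) (i j : ℕ) :
    lehmer T i j = colLehmer (fun r => T r j) i := rfl

variable {f g : ℕ → ℕ} {i s t : ℕ}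

theorem colLehmer_congr (h : ∀ x ≤ i, g x = f x) : colLehmer g i = colLehmer f i := by
  unfold colLehmer
  rw [h i le_rfl]
  congr 1
  ext k
  simp only [Finset.mem_filter]
  exact and_congr_right fun _ =>
    forall_congr' fun x => imp_congr_right fun _ => imp_congr_right fun hx => by rw [h x hx.le]

theorem colLehmer_le_of_raise (hs : 1 ≤ s) (ha : 1 ≤ f s) (hlt : f s < g s)
    (hrest : ∀ x ≤ i, x ≠ s → g x = f x)
    (huniq : ∀ x, 1 ≤ x → x < i → x ≠ s → f x ≠ f s) : colLehmer f i ≤ colLehmer g i := by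
  rcases lt_trichotomy i s with his | rfl | his
  · exact (colLehmer_congr fun x hx => hrest x hx (by omega)).ge
  · unfold colLehmer
    refine Finset.card_le_card fun k hk => ?_
    simp only [Finset.mem_filter, Finset.mem_Ico] at hk ⊢
    exact ⟨⟨hk.1.1, by omega⟩, fun x h1 h2 => by rw [hrest x h2.le h2.ne]; exact hk.2 x h1 h2⟩
  · unfold colLehmer
    rw [hrest i le_rfl his.ne']
    refine Finset.card_le_card_of_exchange (a := f s) (b := g s) ?_ ?_ ?_
    · simp only [Finset.mem_filter, not_and, not_forall, not_not]
      exact fun _ => ⟨s, hs, his, rfl⟩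
    · intro k hk
      simp only [Finset.mem_erase, Finset.mem_filter] at hk ⊢
      refine ⟨hk.2.1, fun x h1 h2 => ?_⟩
      by_cases hxs : x = s
      · subst hxs; exact hk.1.symm
      · rw [hrest x h2.le hxs]; exact hk.2.2 x h1 h2
    · intro hb
      simp only [Finset.mem_filter, Finset.mem_Ico] at hb ⊢
      refine ⟨⟨ha, by omega⟩, fun x h1 h2 => ?_⟩
      by_cases hxs : x = s
      · subst hxs; omega
      · rw [hrest x h2.le hxs]; exact huniq x h1 h2 hxs

theorem colLehmer_eq_of_swap (hs : 1 ≤ s) (ht : 1 ≤ t) (hsi : s < i) (hti : t < i)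
    (hgs : g s = f t) (hgt : g t = f s) (hrest : ∀ x ≤ i, x ≠ s → x ≠ t → g x = f x) :
    colLehmer g i = colLehmer f i := by
  unfold colLehmer
  rw [hrest i le_rfl (by omega) (by omega)]
  congr 1
  ext k
  simp only [Finset.mem_filter]
  refine and_congr_right fun _ => ⟨fun H x h1 h2 => ?_, fun H x h1 h2 => ?_⟩
  · by_cases hxs : x = s
    · subst hxs; rw [← hgt]; exact H t ht hti
    by_cases hxt : x = t
    · subst hxt; rw [← hgs]; exact H s hs hsi
    · rw [← hrest x h2.le hxs hxt]; exact H x h1 h2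
  · by_cases hxs : x = s
    · subst hxs; rw [hgs]; exact H t ht hti
    by_cases hxt : x = t
    · subst hxt; rw [hgt]; exact H s hs hsi
    · rw [hrest x h2.le hxs hxt]; exact H x h1 h2

theorem colLehmer_le_of_swap (hs : 1 ≤ s) (hst : s < t) (ha : 1 ≤ f s) (hab : f s < f t)
    (hgs : g s = f t) (hgt : g t = f s) (hrest : ∀ x ≤ i, x ≠ s → x ≠ t → g x = f x)
    (hmid : ∀ k, f s < k → k < f t → ∃ h, 1 ≤ h ∧ h < s ∧ f h = k)
    (huniq : ∀ x, 1 ≤ x → x < t → x ≠ s → f x ≠ f s) : colLehmer f i ≤ colLehmer g i := by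
  rcases lt_trichotomy i t with hit | rfl | hit
  · exact colLehmer_le_of_raise hs ha (by omega) (fun x hx hxs => hrest x hx hxs (by omega))
      fun x h1 h2 hxs => huniq x h1 (by omega) hxs
  · unfold colLehmer
    refine Finset.card_le_card fun k hk => ?_
    simp only [Finset.mem_filter, Finset.mem_Ico] at hk ⊢
    obtain ⟨⟨hk1, hk2⟩, hfree⟩ := hk
    have hka : k < f s := by
      rcases lt_trichotomy k (f s) with h | h | h
      · exact h
      · exact absurd h.symm (hfree s hs hst)
      · obtain ⟨x, hx1, hxs, hx⟩ := hmid k h hk2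
        exact absurd hx (hfree x hx1 (by omega))
    refine ⟨⟨hk1, by omega⟩, fun x h1 h2 => ?_⟩
    by_cases hxs : x = s
    · subst hxs; omega
    · rw [hrest x h2.le hxs h2.ne]; exact hfree x h1 h2
  · exact (colLehmer_eq_of_swap hs (by omega) (by omega) hit hgs hgt hrest).ge

end Lehmer


/-- The pairs of pipes whose crossing changes row under the chute move in a rectangle with
south-west corner `(b, c)` and east side in column `d`. -/
def IsChutePair (n : ℕ) (P : ℕ → ℕ → Bool) (b c d : ℕ) (z : Sym2 ℕ) : Prop :=
  z = s(westLabel n P b c, northLabel n P (b + 1) c) ∨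
    ∃ j, c < j ∧ j < d ∧ (z = s(westLabel n P b c, northLabel n P (b + 1) j) ∨
      z = s(northLabel n P (b + 1) c, northLabel n P (b + 1) j))

namespace IsChuteRect

variable {n : ℕ} {P : ℕ → ℕ → Bool} {a b c d : ℕ}

theorem bounds (hR : IsChuteRect n P a b c d) :
    1 ≤ a ∧ a < b ∧ 1 ≤ c ∧ c < d ∧ b + d ≤ n + 1 :=
  ⟨hR.1, hR.2.1, hR.2.2.1, hR.2.2.2.1, hR.2.2.2.2.1⟩

theorem tile_northWest (hR : IsChuteRect n P a b c d) : P a c = false := hR.2.2.2.2.2.1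

theorem tile_southWest (hR : IsChuteRect n P a b c d) : P b c = false := hR.2.2.2.2.2.2.1

theorem tile_southEast (hR : IsChuteRect n P a b c d) : P b d = false := hR.2.2.2.2.2.2.2.1

theorem tile_eq_true (hR : IsChuteRect n P a b c d) {i j : ℕ}
    (h : a ≤ i ∧ i ≤ b ∧ c ≤ j ∧ j ≤ d ∧ ¬(i = a ∧ j = c) ∧ ¬(i = b ∧ j = c) ∧
      ¬(i = b ∧ j = d)) : P i j = true :=
  hR.2.2.2.2.2.2.2.2 i j h.1 h.2.1 h.2.2.1 h.2.2.2.1 h.2.2.2.2.1 h.2.2.2.2.2.1 h.2.2.2.2.2.2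

/-! In `P` the pipe `westLabel n P b c` bumps north at `(b, c)`, turns east at `(a, c)` and runs
along row `a`; the pipe `northLabel n P (b + 1) c` turns east at `(b, c)` and north at `(b, d)`;
the pipe `northLabel n P (b + 1) j`, `c < j < d`, runs up column `j`, and the pipe
`westLabel n P r c`, `a < r < b`, runs along row `r`. -/

theorem southLabel_left (hR : IsChuteRect n P a b c d) {r : ℕ} (h1 : a ≤ r) (h2 : r < b) :
    southLabel n P r c = westLabel n P b c := by
  obtain ⟨ha, hab, hc, hcd, hbd⟩ := hR.bounds
  rw [southLabel_eq, northLabel_eq_of_vertical_crosses (r₀ := b) (by omega) (by omega)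
    fun i hi1 hi2 => hR.tile_eq_true (by omega), northLabel_of_bump (by omega) hR.tile_southWest]

theorem westLabel_bottom (hR : IsChuteRect n P a b c d) {j : ℕ} (h1 : c < j) (h2 : j ≤ d) :
    westLabel n P b j = northLabel n P (b + 1) c := by
  obtain ⟨ha, hab, hc, hcd, hbd⟩ := hR.bounds
  rw [westLabel_eq_of_horizontal_crosses hc h1 (by omega) fun j' h1 h2 =>
    hR.tile_eq_true (by omega), eastLabel_of_bump (by omega) hR.tile_southWest, southLabel_eq]

theorem southLabel_mid (hR : IsChuteRect n P a b c d) {r j : ℕ} (h1 : a ≤ r) (h2 : r ≤ b)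
    (h3 : c < j) (h4 : j < d) : southLabel n P r j = northLabel n P (b + 1) j := by
  obtain ⟨ha, hab, hc, hcd, hbd⟩ := hR.bounds
  exact northLabel_eq_of_vertical_crosses (by omega) (by omega)
    fun i hi1 hi2 => hR.tile_eq_true (by omega)

theorem westLabel_mid (hR : IsChuteRect n P a b c d) {r j : ℕ} (h1 : a < r) (h2 : r < b)
    (h3 : c ≤ j) (h4 : j ≤ d) : westLabel n P r j = westLabel n P r c := by
  obtain ⟨ha, hab, hc, hcd, hbd⟩ := hR.bounds
  rcases h3.eq_or_lt with rfl | h3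
  · rfl
  · rw [westLabel_eq_of_horizontal_crosses hc h3 (by omega) fun j' h1 h2 =>
      hR.tile_eq_true (by omega), eastLabel_of_cross (by omega) (hR.tile_eq_true (by omega))]

theorem southLabel_right (hR : IsChuteRect n P a b c d) {r : ℕ} (h1 : a ≤ r) (h2 : r < b) :
    southLabel n P r d = northLabel n P (b + 1) c := by
  obtain ⟨ha, hab, hc, hcd, hbd⟩ := hR.bounds
  rw [southLabel_eq, northLabel_eq_of_vertical_crosses (r₀ := b) (by omega) (by omega)
    fun i hi1 hi2 => hR.tile_eq_true (by omega), northLabel_of_not_cross hR.tile_southEast,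
    hR.westLabel_bottom hcd le_rfl]

theorem westLabel_top (hR : IsChuteRect n P a b c d) {j : ℕ} (h1 : c < j) (h2 : j ≤ d) :
    westLabel n P a j = westLabel n P b c := by
  obtain ⟨ha, hab, hc, hcd, hbd⟩ := hR.bounds
  rw [westLabel_eq_of_horizontal_crosses hc h1 (by omega) fun j' h1 h2 =>
    hR.tile_eq_true (by omega), eastLabel_of_bump (by omega) hR.tile_northWest,
    hR.southLabel_left le_rfl hab]

theorem chute_tile_eq_true (hR : IsChuteRect n P a b c d) {i j : ℕ}
    (h : a ≤ i ∧ i ≤ b ∧ c ≤ j ∧ j ≤ d ∧ ¬(i = a ∧ j = c) ∧ ¬(i = a ∧ j = d) ∧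
      ¬(i = b ∧ j = d)) : chuteResult P a b c d i j = true := by
  by_cases hbc : i = b ∧ j = c
  · obtain ⟨rfl, rfl⟩ := hbc
    exact chuteResult_southWest
  · rw [chuteResult_of_ne hbc h.2.2.2.2.2.1]
    exact hR.tile_eq_true (by omega)

theorem chute_tile_northWest (hR : IsChuteRect n P a b c d) :
    chuteResult P a b c d a c = false := by
  obtain ⟨ha, hab, hc, hcd, hbd⟩ := hR.bounds
  rw [chuteResult_of_ne (by omega) (by omega)]
  exact hR.tile_northWest

theorem chute_tile_southEast (hR : IsChuteRect n P a b c d) :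
    chuteResult P a b c d b d = false := by
  obtain ⟨ha, hab, hc, hcd, hbd⟩ := hR.bounds
  rw [chuteResult_of_ne (by omega) (by omega)]
  exact hR.tile_southEast

/-! In `chuteResult P a b c d` the pipes `westLabel n P b c` and `northLabel n P (b + 1) c`
cross at `(b, c)`; the former now runs along row `b` and up column `d`, the latter up column `c`
and along row `a`. -/

theorem chute_southLabel_left (hR : IsChuteRect n P a b c d) {r : ℕ} (h1 : a ≤ r) (h2 : r ≤ b) :
    southLabel n (chuteResult P a b c d) r c = northLabel n P (b + 1) c := by
  obtain ⟨ha, hab, hc, hcd, hbd⟩ := hR.bounds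
  rw [southLabel_eq, northLabel_eq_of_vertical_crosses (r₀ := b + 1) (by omega) (by omega)
    fun i hi1 hi2 => hR.chute_tile_eq_true (by omega), northLabel_chuteResult_below hab]

theorem chute_westLabel_bottom (hR : IsChuteRect n P a b c d) {j : ℕ} (h1 : c ≤ j)
    (h2 : j ≤ d) : westLabel n (chuteResult P a b c d) b j = westLabel n P b c := by
  obtain ⟨ha, hab, hc, hcd, hbd⟩ := hR.bounds
  rcases h1.eq_or_lt with rfl | h1
  · exact westLabel_chuteResult_left hcd b
  · rw [westLabel_eq_of_horizontal_crosses hc h1 (by omega) fun j' h1 h2 =>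
      hR.chute_tile_eq_true (by omega), eastLabel_of_cross (by omega) chuteResult_southWest,
      westLabel_chuteResult_left hcd b]

theorem chute_southLabel_mid (hR : IsChuteRect n P a b c d) {r j : ℕ} (h1 : a ≤ r)
    (h2 : r ≤ b) (h3 : c < j) (h4 : j < d) :
    southLabel n (chuteResult P a b c d) r j = northLabel n P (b + 1) j := by
  obtain ⟨ha, hab, hc, hcd, hbd⟩ := hR.bounds
  rw [southLabel_eq, northLabel_eq_of_vertical_crosses (r₀ := b + 1) (by omega) (by omega)
    fun i hi1 hi2 => hR.chute_tile_eq_true (by omega), northLabel_chuteResult_below hab]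

theorem chute_westLabel_mid (hR : IsChuteRect n P a b c d) {r j : ℕ} (h1 : a < r) (h2 : r < b)
    (h3 : c ≤ j) (h4 : j ≤ d) :
    westLabel n (chuteResult P a b c d) r j = westLabel n P r c := by
  obtain ⟨ha, hab, hc, hcd, hbd⟩ := hR.bounds
  rw [← westLabel_chuteResult_left (a := a) (b := b) hcd r]
  rcases h3.eq_or_lt with rfl | h3
  · rfl
  · rw [westLabel_eq_of_horizontal_crosses hc h3 (by omega) fun j' h1 h2 =>
      hR.chute_tile_eq_true (by omega),
      eastLabel_of_cross (by omega) (hR.chute_tile_eq_true (by omega))]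

theorem chute_southLabel_right (hR : IsChuteRect n P a b c d) {r : ℕ} (h1 : a ≤ r)
    (h2 : r < b) : southLabel n (chuteResult P a b c d) r d = westLabel n P b c := by
  obtain ⟨ha, hab, hc, hcd, hbd⟩ := hR.bounds
  rw [southLabel_eq, northLabel_eq_of_vertical_crosses (r₀ := b) (by omega) (by omega)
    fun i hi1 hi2 => hR.chute_tile_eq_true (by omega),
    northLabel_of_not_cross hR.chute_tile_southEast,
    hR.chute_westLabel_bottom hcd.le le_rfl]

theorem chute_westLabel_top (hR : IsChuteRect n P a b c d) {j : ℕ} (h1 : c < j) (h2 : j ≤ d) :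
    westLabel n (chuteResult P a b c d) a j = northLabel n P (b + 1) c := by
  obtain ⟨ha, hab, hc, hcd, hbd⟩ := hR.bounds
  rw [westLabel_eq_of_horizontal_crosses hc h1 (by omega) fun j' h1 h2 =>
    hR.chute_tile_eq_true (by omega),
    eastLabel_of_bump (by omega) hR.chute_tile_northWest,
    hR.chute_southLabel_left le_rfl hab.le]

theorem chute_northLabel_top (hR : IsChuteRect n P a b c d) {j : ℕ} (h1 : c ≤ j) (h2 : j ≤ d) :
    northLabel n (chuteResult P a b c d) a j = northLabel n P a j := by
  obtain ⟨ha, hab, hc, hcd, hbd⟩ := hR.bounds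
  rcases h1.eq_or_lt with rfl | h1
  · rw [northLabel_of_bump (by omega) hR.tile_northWest,
      northLabel_of_bump (by omega) hR.chute_tile_northWest,
      westLabel_chuteResult_left hcd]
  rcases h2.eq_or_lt with rfl | h2
  · rw [northLabel_of_bump (by omega) (chuteResult_northEast hab), hR.chute_westLabel_top h1 le_rfl,
      northLabel_of_cross (i := a) (j := j) (by omega) (hR.tile_eq_true (by omega)),
      hR.southLabel_right le_rfl hab]
  · rw [northLabel_of_cross (i := a) (j := j) (by omega) (hR.chute_tile_eq_true (by omega)),
      hR.chute_southLabel_mid le_rfl hab.le h1 h2,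
      northLabel_of_cross (i := a) (j := j) (by omega) (hR.tile_eq_true (by omega)),
      hR.southLabel_mid le_rfl hab.le h1 h2]

theorem chute_eastLabel_right (hR : IsChuteRect n P a b c d) {r : ℕ} (h1 : a ≤ r) (h2 : r ≤ b)
    (hrd : r + d ≤ n) : eastLabel n (chuteResult P a b c d) r d = eastLabel n P r d := by
  obtain ⟨ha, hab, hc, hcd, hbd⟩ := hR.bounds
  rcases h1.eq_or_lt with rfl | h1
  · rw [eastLabel_of_bump hrd (chuteResult_northEast hab), hR.chute_southLabel_right le_rfl hab,
      eastLabel_of_cross hrd (hR.tile_eq_true (by omega)), hR.westLabel_top hcd le_rfl]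
  rcases h2.eq_or_lt with rfl | h2
  · rw [eastLabel_of_bump hrd hR.tile_southEast,
      eastLabel_of_bump hrd hR.chute_tile_southEast,
      southLabel_eq, southLabel_eq, northLabel_chuteResult_below hab]
  · rw [eastLabel_of_cross hrd (hR.chute_tile_eq_true (by omega)),
      eastLabel_of_cross hrd (hR.tile_eq_true (by omega)),
      hR.chute_westLabel_mid h1 h2 hcd.le le_rfl, hR.westLabel_mid h1 h2 hcd.le le_rfl]


theorem chute_westLabel_of_left (hR : IsChuteRect n P a b c d) {i j : ℕ} (hin : i + j ≤ n + 1)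
    (hout : ¬(a ≤ i ∧ i ≤ b ∧ c ≤ j ∧ j ≤ d))
    (hleft : 2 ≤ j → ¬(a ≤ i ∧ i ≤ b ∧ c ≤ j - 1 ∧ j - 1 ≤ d) →
      labels n (chuteResult P a b c d) i (j - 1) = labels n P i (j - 1)) :
    westLabel n (chuteResult P a b c d) i j = westLabel n P i j := by
  obtain ⟨ha, hab, hc, hcd, hbd⟩ := hR.bounds
  unfold westLabel
  split
  · rfl
  · by_cases hrect : a ≤ i ∧ i ≤ b ∧ c ≤ j - 1 ∧ j - 1 ≤ d
    · rw [show j - 1 = d by omega]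
      exact hR.chute_eastLabel_right hrect.1 hrect.2.1 (by omega)
    · rw [hleft (by omega) hrect]

theorem chute_southLabel_of_below (hR : IsChuteRect n P a b c d) {i j : ℕ}
    (hbelow : ¬(a ≤ i + 1 ∧ i + 1 ≤ b ∧ c ≤ j ∧ j ≤ d) →
      labels n (chuteResult P a b c d) (i + 1) j = labels n P (i + 1) j)
    (hout : ¬(a ≤ i ∧ i ≤ b ∧ c ≤ j ∧ j ≤ d)) :
    southLabel n (chuteResult P a b c d) i j = southLabel n P i j := by
  obtain ⟨ha, hab, hc, hcd, hbd⟩ := hR.bounds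
  by_cases hrect : a ≤ i + 1 ∧ i + 1 ≤ b ∧ c ≤ j ∧ j ≤ d
  · rw [southLabel_eq, southLabel_eq, show i + 1 = a by omega]
    exact hR.chute_northLabel_top hrect.2.2.1 hrect.2.2.2
  · unfold southLabel
    rw [hbelow hrect]

theorem labels_chuteResult_of_outside (hR : IsChuteRect n P a b c d) {i j : ℕ}
    (hin : i + j ≤ n + 1) (hout : ¬(a ≤ i ∧ i ≤ b ∧ c ≤ j ∧ j ≤ d)) :
    labels n (chuteResult P a b c d) i j = labels n P i j := by
  obtain ⟨ha, hab, hc, hcd, hbd⟩ := hR.bounds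
  rw [labels_eq, labels_eq (P := P),
    hR.chute_westLabel_of_left hin hout fun _ h => labels_chuteResult_of_outside hR (by omega) h,
    chuteResult_of_ne (by omega) (by omega)]
  split
  · next hstair =>
    rw [hR.chute_southLabel_of_below (fun h => labels_chuteResult_of_outside hR (by omega) h)
      hout]
  · rfl
termination_by (n + 1 - i) + j
decreasing_by all_goals omega

theorem crossAt_chuteResult_iff_of_outside (hR : IsChuteRect n P a b c d) {i j p q : ℕ}
    (hout : ¬(a ≤ i ∧ i ≤ b ∧ c ≤ j ∧ j ≤ d)) :
    CrossAt n (chuteResult P a b c d) i j p q ↔ CrossAt n P i j p q := by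
  obtain ⟨ha, hab, hc, hcd, hbd⟩ := hR.bounds
  unfold CrossAt
  refine and_congr_right fun hi => and_congr_right fun hj => and_congr_right fun hij => ?_
  rw [chuteResult_of_ne (by omega) (by omega),
    hR.chute_westLabel_of_left (by omega) hout fun _ h =>
      hR.labels_chuteResult_of_outside (by omega) h,
    hR.chute_southLabel_of_below (fun h => hR.labels_chuteResult_of_outside (by omega) h) hout]

theorem isChutePair_of_crossAt (hR : IsChuteRect n P a b c d) {i j p q : ℕ}
    (hx : CrossAt n P i j p q) (hi : i = a ∨ i = b) (h3 : c ≤ j) (h4 : j ≤ d) :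
    IsChutePair n P b c d s(p, q) := by
  obtain ⟨ha, hab, hc, hcd, hbd⟩ := hR.bounds
  obtain ⟨⟨-, -, -, htile⟩, hpq⟩ := crossAt_iff.1 hx
  rcases hi with rfl | rfl <;> rcases h3.eq_or_lt with rfl | h3
  · rw [hR.tile_northWest] at htile; cases htile
  · rcases h4.eq_or_lt with rfl | h4
    · left; rw [hpq, hR.westLabel_top h3 le_rfl, hR.southLabel_right le_rfl hab]
    · right; refine ⟨j, h3, h4, Or.inl ?_⟩
      rw [hpq, hR.westLabel_top h3 h4.le, hR.southLabel_mid le_rfl hab.le h3 h4]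
  · rw [hR.tile_southWest] at htile; cases htile
  · rcases h4.eq_or_lt with rfl | h4
    · rw [hR.tile_southEast] at htile; cases htile
    · right; refine ⟨j, h3, h4, Or.inr ?_⟩
      rw [hpq, hR.westLabel_bottom h3 h4.le, hR.southLabel_mid hab.le le_rfl h3 h4]

theorem isChutePair_of_chute_crossAt (hR : IsChuteRect n P a b c d) {i j p q : ℕ}
    (hx : CrossAt n (chuteResult P a b c d) i j p q) (hi : i = a ∨ i = b) (h3 : c ≤ j)
    (h4 : j ≤ d) : IsChutePair n P b c d s(p, q) := by
  obtain ⟨ha, hab, hc, hcd, hbd⟩ := hR.bounds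
  obtain ⟨⟨-, -, -, htile⟩, hpq⟩ := crossAt_iff.1 hx
  rcases hi with rfl | rfl <;> rcases h3.eq_or_lt with rfl | h3
  · rw [chuteResult_of_ne (by omega) (by omega), hR.tile_northWest] at htile; cases htile
  · rcases h4.eq_or_lt with rfl | h4
    · rw [chuteResult_northEast hab] at htile; cases htile
    · right; refine ⟨j, h3, h4, Or.inr ?_⟩
      rw [hpq, hR.chute_westLabel_top h3 h4.le, hR.chute_southLabel_mid le_rfl hab.le h3 h4]
  · left; rw [hpq, hR.chute_westLabel_bottom le_rfl hcd.le, hR.chute_southLabel_left hab.le le_rfl]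
  · rcases h4.eq_or_lt with rfl | h4
    · rw [chuteResult_of_ne (by omega) (by omega), hR.tile_southEast] at htile; cases htile
    · right; refine ⟨j, h3, h4, Or.inl ?_⟩
      rw [hpq, hR.chute_westLabel_bottom h3.le h4.le, hR.chute_southLabel_mid hab.le le_rfl h3 h4]

theorem chute_crossAt_swap_iff (hR : IsChuteRect n P a b c d) {r j p q : ℕ} (h1 : a < r)
    (h2 : r < b) (h3 : c ≤ j) (h4 : j ≤ d) :
    CrossAt n (chuteResult P a b c d) r (Equiv.swap c d j) p q ↔ CrossAt n P r j p q := by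
  obtain ⟨ha, hab, hc, hcd, hbd⟩ := hR.bounds
  have hj' : c ≤ Equiv.swap c d j ∧ Equiv.swap c d j ≤ d := by
    rw [Equiv.swap_apply_def]; split_ifs <;> omega
  have hw : westLabel n (chuteResult P a b c d) r (Equiv.swap c d j) = westLabel n P r j := by
    rw [hR.chute_westLabel_mid h1 h2 hj'.1 hj'.2, hR.westLabel_mid h1 h2 h3 h4]
  have hs : southLabel n (chuteResult P a b c d) r (Equiv.swap c d j) = southLabel n P r j := by
    rcases h3.eq_or_lt with rfl | h3
    · rw [Equiv.swap_apply_left, hR.chute_southLabel_right h1.le h2, hR.southLabel_left h1.le h2]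
    rcases h4.eq_or_lt with rfl | h4
    · rw [Equiv.swap_apply_right, hR.chute_southLabel_left h1.le h2.le,
        hR.southLabel_right h1.le h2]
    · rw [Equiv.swap_apply_of_ne_of_ne h3.ne' h4.ne, hR.chute_southLabel_mid h1.le h2.le h3 h4,
        hR.southLabel_mid h1.le h2.le h3 h4]
  rw [crossAt_iff, crossAt_iff, hw, hs,
    hR.chute_tile_eq_true (i := r) (j := Equiv.swap c d j) (by omega),
    hR.tile_eq_true (i := r) (j := j) (by omega)]
  constructor <;> rintro ⟨-, h⟩ <;> exact ⟨⟨by omega, by omega, by omega, rfl⟩, h⟩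

theorem exists_crossAt_chuteResult_iff (hR : IsChuteRect n P a b c d) {p q : ℕ}
    (hpq : ¬ IsChutePair n P b c d s(p, q)) (i : ℕ) :
    (∃ j, CrossAt n P i j p q) ↔ ∃ j, CrossAt n (chuteResult P a b c d) i j p q := by
  obtain ⟨ha, hab, hc, hcd, hbd⟩ := hR.bounds
  have hswap : ∀ j, c ≤ j → j ≤ d → c ≤ Equiv.swap c d j ∧ Equiv.swap c d j ≤ d := fun j h3 h4 => by
    rw [Equiv.swap_apply_def]; split_ifs <;> omega
  constructor
  · rintro ⟨j, hx⟩
    by_cases hrect : a ≤ i ∧ i ≤ b ∧ c ≤ j ∧ j ≤ d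
    · by_cases hi : i = a ∨ i = b
      · exact absurd (hR.isChutePair_of_crossAt hx hi hrect.2.2.1 hrect.2.2.2) hpq
      · exact ⟨_, (hR.chute_crossAt_swap_iff (by omega) (by omega) hrect.2.2.1 hrect.2.2.2).2 hx⟩
    · exact ⟨j, (hR.crossAt_chuteResult_iff_of_outside hrect).2 hx⟩
  · rintro ⟨j, hx⟩
    by_cases hrect : a ≤ i ∧ i ≤ b ∧ c ≤ j ∧ j ≤ d
    · by_cases hi : i = a ∨ i = b
      · exact absurd (hR.isChutePair_of_chute_crossAt hx hi hrect.2.2.1 hrect.2.2.2) hpq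
      · obtain ⟨h3, h4⟩ := hswap j hrect.2.2.1 hrect.2.2.2
        refine ⟨_, (hR.chute_crossAt_swap_iff (by omega) (by omega) h3 h4).1 ?_⟩
        rwa [Equiv.swap_apply_self]
    · exact ⟨j, (hR.crossAt_chuteResult_iff_of_outside hrect).1 hx⟩

theorem theta_chuteResult_of_not_isChutePair (hR : IsChuteRect n P a b c d)
    (hred : Reduced n P) (hred' : Reduced n (chuteResult P a b c d)) {p q : ℕ}
    (hpq : ¬ IsChutePair n P b c d s(p, q)) :
    theta n (chuteResult P a b c d) p q = theta n P p q :=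
  theta_eq_of_forall_exists_crossAt_iff hred hred' (hR.exists_crossAt_chuteResult_iff hpq)

theorem crossAt_northEast (hR : IsChuteRect n P a b c d) :
    CrossAt n P a d (westLabel n P b c) (northLabel n P (b + 1) c) := by
  obtain ⟨ha, hab, hc, hcd, hbd⟩ := hR.bounds
  exact ⟨ha, by omega, by omega, hR.tile_eq_true (by omega),
    Or.inl ⟨hR.westLabel_top hcd le_rfl, hR.southLabel_right le_rfl hab⟩⟩

theorem crossAt_top (hR : IsChuteRect n P a b c d) {j : ℕ} (h1 : c < j) (h2 : j < d) :
    CrossAt n P a j (westLabel n P b c) (northLabel n P (b + 1) j) := by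
  obtain ⟨ha, hab, hc, hcd, hbd⟩ := hR.bounds
  exact ⟨ha, by omega, by omega, hR.tile_eq_true (by omega),
    Or.inl ⟨hR.westLabel_top h1 h2.le, hR.southLabel_mid le_rfl hab.le h1 h2⟩⟩

theorem crossAt_bottom (hR : IsChuteRect n P a b c d) {j : ℕ} (h1 : c < j) (h2 : j < d) :
    CrossAt n P b j (northLabel n P (b + 1) c) (northLabel n P (b + 1) j) := by
  obtain ⟨ha, hab, hc, hcd, hbd⟩ := hR.bounds
  exact ⟨by omega, by omega, by omega, hR.tile_eq_true (by omega),
    Or.inl ⟨hR.westLabel_bottom h1 h2.le, hR.southLabel_mid hab.le le_rfl h1 h2⟩⟩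

theorem crossAt_left (hR : IsChuteRect n P a b c d) {r : ℕ} (h1 : a < r) (h2 : r < b) :
    CrossAt n P r c (westLabel n P r c) (westLabel n P b c) := by
  obtain ⟨ha, hab, hc, hcd, hbd⟩ := hR.bounds
  exact ⟨by omega, hc, by omega, hR.tile_eq_true (by omega),
    Or.inl ⟨rfl, hR.southLabel_left h1.le h2⟩⟩

theorem crossAt_mid (hR : IsChuteRect n P a b c d) {r j : ℕ} (h1 : a < r) (h2 : r < b)
    (h3 : c < j) (h4 : j < d) :
    CrossAt n P r j (westLabel n P r c) (northLabel n P (b + 1) j) := by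
  obtain ⟨ha, hab, hc, hcd, hbd⟩ := hR.bounds
  exact ⟨by omega, by omega, by omega, hR.tile_eq_true (by omega),
    Or.inl ⟨hR.westLabel_mid h1 h2 h3.le h4.le, hR.southLabel_mid h1.le h2.le h3 h4⟩⟩

theorem chute_crossAt_southWest (hR : IsChuteRect n P a b c d) :
    CrossAt n (chuteResult P a b c d) b c (westLabel n P b c) (northLabel n P (b + 1) c) := by
  obtain ⟨ha, hab, hc, hcd, hbd⟩ := hR.bounds
  exact ⟨by omega, hc, by omega, chuteResult_southWest,
    Or.inl ⟨hR.chute_westLabel_bottom le_rfl hcd.le, hR.chute_southLabel_left hab.le le_rfl⟩⟩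

theorem chute_crossAt_bottom (hR : IsChuteRect n P a b c d) {j : ℕ} (h1 : c < j) (h2 : j < d) :
    CrossAt n (chuteResult P a b c d) b j (westLabel n P b c) (northLabel n P (b + 1) j) := by
  obtain ⟨ha, hab, hc, hcd, hbd⟩ := hR.bounds
  exact ⟨by omega, by omega, by omega, hR.chute_tile_eq_true (by omega),
    Or.inl ⟨hR.chute_westLabel_bottom h1.le h2.le, hR.chute_southLabel_mid hab.le le_rfl h1 h2⟩⟩

theorem chute_crossAt_top (hR : IsChuteRect n P a b c d) {j : ℕ} (h1 : c < j) (h2 : j < d) :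
    CrossAt n (chuteResult P a b c d) a j (northLabel n P (b + 1) c)
      (northLabel n P (b + 1) j) := by
  obtain ⟨ha, hab, hc, hcd, hbd⟩ := hR.bounds
  exact ⟨ha, by omega, by omega, hR.chute_tile_eq_true (by omega),
    Or.inl ⟨hR.chute_westLabel_top h1 h2.le, hR.chute_southLabel_mid le_rfl hab.le h1 h2⟩⟩

theorem westLabel_lt_northLabel (hR : IsChuteRect n P a b c d) (hred : Reduced n P) :
    westLabel n P b c < northLabel n P (b + 1) c := by
  have := westLabel_lt_southLabel_of_crossAt hred hR.crossAt_northEast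
  obtain ⟨-, hab, -, hcd, -⟩ := hR.bounds
  rwa [hR.westLabel_top hcd le_rfl, hR.southLabel_right le_rfl hab] at this

theorem northLabel_lt_northLabel (hR : IsChuteRect n P a b c d) (hred : Reduced n P) {j : ℕ}
    (h1 : c < j) (h2 : j < d) : northLabel n P (b + 1) c < northLabel n P (b + 1) j := by
  have := westLabel_lt_southLabel_of_crossAt hred (hR.crossAt_bottom h1 h2)
  rwa [hR.westLabel_bottom h1 h2.le] at this

theorem theta_chuteResult_eq_of_lt (hR : IsChuteRect n P a b c d) (hred : Reduced n P)
    (hred' : Reduced n (chuteResult P a b c d)) {x m : ℕ} (hxm : x < m)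
    (h1 : ¬(x = westLabel n P b c ∧ m = northLabel n P (b + 1) c))
    (h2 : ∀ j, c < j → j < d → m = northLabel n P (b + 1) j →
      x ≠ westLabel n P b c ∧ x ≠ northLabel n P (b + 1) c) :
    theta n (chuteResult P a b c d) x m = theta n P x m := by
  have hST := hR.westLabel_lt_northLabel hred
  refine hR.theta_chuteResult_of_not_isChutePair hred hred' ?_
  rintro (h | ⟨j, hj1, hj2, h | h⟩) <;> rw [Sym2.eq_iff] at h
  · omega
  · have := hR.northLabel_lt_northLabel hred hj1 hj2
    have := h2 j hj1 hj2
    omega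
  · have := hR.northLabel_lt_northLabel hred hj1 hj2
    have := h2 j hj1 hj2
    omega

theorem exists_theta_eq_of_lt_of_lt (hR : IsChuteRect n P a b c d) (hred : Reduced n P) {j : ℕ}
    (h1 : c < j) (h2 : j < d) {k : ℕ} (hak : a < k) (hkb : k < b) :
    ∃ h, 1 ≤ h ∧ h < westLabel n P b c ∧ theta n P h (northLabel n P (b + 1) j) = k := by
  obtain ⟨ha, -⟩ := hR.bounds
  refine ⟨westLabel n P k c, (by omega : 1 ≤ k).trans (row_le_westLabel k c), ?_,
    theta_eq_of_crossAt hred (hR.crossAt_mid hak hkb h1 h2)⟩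
  have := westLabel_lt_southLabel_of_crossAt hred (hR.crossAt_left hak hkb)
  rwa [hR.southLabel_left hak.le hkb] at this

theorem theta_ne_of_southLabel_top (hR : IsChuteRect n P a b c d) (hred : Reduced n P) {j : ℕ}
    (h1 : c < j) (h2 : j ≤ d) {x : ℕ} (hxq : x < southLabel n P a j)
    (hx : x ≠ westLabel n P b c) : theta n P x (southLabel n P a j) ≠ a := fun hθ => by
  obtain ⟨ha, hab, hc, hcd, hbd⟩ := hR.bounds
  exact hx ((eq_westLabel_of_theta_eq hred ha (by omega) (by omega) rfl hxq hθ).trans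
    (hR.westLabel_top h1 h2))

theorem phi_le_phi_chuteResult (hR : IsChuteRect n P a b c d) (hred : Reduced n P)
    (hred' : Reduced n (chuteResult P a b c d)) {i m : ℕ} (him : i < m) :
    phi n P i m ≤ phi n (chuteResult P a b c d) i m := by
  obtain ⟨ha, hab, hc, hcd, hbd⟩ := hR.bounds
  have hST := hR.westLabel_lt_northLabel hred
  have hS : 1 ≤ westLabel n P b c := (by omega : 1 ≤ b).trans (row_le_westLabel b c)
  have hθST := theta_eq_of_crossAt hred hR.crossAt_northEast
  have hθST' := theta_eq_of_crossAt hred' hR.chute_crossAt_southWest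
  simp only [phi, lehmer_eq_colLehmer]
  by_cases hmT : m = northLabel n P (b + 1) c
  · subst hmT
    refine colLehmer_le_of_raise hS (by omega) (by omega) (fun x hx hxS => ?_) fun x h1 h2 hxS => ?_
    · exact hR.theta_chuteResult_eq_of_lt hred hred' (by omega) (fun h => hxS h.1)
        fun j hj1 hj2 hT => absurd hT (hR.northLabel_lt_northLabel hred hj1 hj2).ne
    · have := hR.theta_ne_of_southLabel_top hred hcd le_rfl (x := x)
      rw [hR.southLabel_right le_rfl hab] at this
      exact hθST ▸ this (by omega) hxS
  by_cases hmV : ∃ j, c < j ∧ j < d ∧ m = northLabel n P (b + 1) j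
  · obtain ⟨j, hj1, hj2, rfl⟩ := hmV
    have hTV := hR.northLabel_lt_northLabel hred hj1 hj2
    have hθSV := theta_eq_of_crossAt hred (hR.crossAt_top hj1 hj2)
    have hθSV' := theta_eq_of_crossAt hred' (hR.chute_crossAt_bottom hj1 hj2)
    have hθTV := theta_eq_of_crossAt hred (hR.crossAt_bottom hj1 hj2)
    have hθTV' := theta_eq_of_crossAt hred' (hR.chute_crossAt_top hj1 hj2)
    refine colLehmer_le_of_swap hS hST (by omega) (by omega) (by rw [hθSV', hθTV])
      (by rw [hθTV', hθSV]) (fun x hx hxS hxT => ?_) (fun k hk1 hk2 => ?_) fun x h1 h2 hxS => ?_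
    · exact hR.theta_chuteResult_eq_of_lt hred hred' (by omega) (fun h => hxS h.1)
        fun _ _ _ _ => ⟨hxS, hxT⟩
    · exact hR.exists_theta_eq_of_lt_of_lt hred hj1 hj2 (by omega) (by omega)
    · have := hR.theta_ne_of_southLabel_top hred hj1 hj2.le (x := x)
      rw [hR.southLabel_mid le_rfl hab.le hj1 hj2] at this
      exact hθSV ▸ this (by omega) hxS
  · exact (colLehmer_congr fun x hx => hR.theta_chuteResult_eq_of_lt hred hred' (by omega)
      (fun h => hmT h.2) fun j hj1 hj2 hm => absurd ⟨j, hj1, hj2, hm⟩ hmV).ge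

end IsChuteRect

/-- If `P ≤_chute Q` then `Φ(P) ≤ Φ(Q)` componentwise. -/
theorem phi_monotone {n : ℕ} (w : Equiv.Perm (Fin n)) (P Q : RPD w)
    (h : chuteLE w P Q) :
    ∀ i j, IsInv w i j → phi n P.1 i j ≤ phi n Q.1 i j := by
  intro i j hinv
  induction h with
  | refl => exact le_rfl
  | @tail X Y _ hstep ih =>
    obtain ⟨a, b, c, d, hR, hY⟩ := hstep
    have hredY : Reduced n (chuteResult X.1 a b c d) := hY ▸ Y.2.2
    exact ih.trans (hY ▸ hR.phi_le_phi_chuteResult X.2.2 hredY hinv.2.1)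
end
end

section
/- A finite lattice Q is meet-semidistributive if and only if for every cover relation α ⋖ β in Q, the set {γ ∈ Q : γ ∧ β = α} has a maximum element. -/
/-!
For `α ≤ β` the set `{γ | γ ⊓ β = α}` is closed under joins: if `(γ₁ ⊔ γ₂) ⊓ β` were strictly
above `α`, pick `d` covering `α` below it. Both `γᵢ` meet `d` in `α`, so both lie below the
maximum `μ` attached to the cover `α ⋖ d`; hence `d ≤ γ₁ ⊔ γ₂ ≤ μ` and `d = μ ⊓ d = α`, a
contradiction. In a finite lattice a nonempty join-closed set has a greatest element.
-/

lemma SupClosed.exists_isGreatest_s14 {L : Type*} [SemilatticeSup L] {s : Set L} (hs : SupClosed s)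
    (hfin : s.Finite) (hne : s.Nonempty) : ∃ m, IsGreatest s m := by
  obtain ⟨m, hm⟩ := hfin.exists_maximal hne
  exact ⟨m, hm.prop, fun x hx ↦ le_sup_right.trans (hm.le_of_ge (hs hm.prop hx) le_sup_left)⟩

section Lattice

variable {L : Type*} [Lattice L] {a b c d : L}

lemma inf_eq_of_inf_eq_of_le_of_le (h : c ⊓ b = a) (had : a ≤ d) (hdb : d ≤ b) : c ⊓ d = a := by
  rw [← inf_eq_right.mpr hdb, ← inf_assoc, h, inf_eq_left.mpr had]

theorem supClosed_setOf_inf_eq [IsStronglyAtomic L]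
    (h : ∀ a d : L, a ⋖ d → ∃ μ, IsGreatest {γ | γ ⊓ d = a} μ) :
    SupClosed {γ | γ ⊓ b = a} := by
  intro γ₁ (h₁ : γ₁ ⊓ b = a) γ₂ (h₂ : γ₂ ⊓ b = a)
  have hle : a ≤ (γ₁ ⊔ γ₂) ⊓ b := h₁ ▸ inf_le_inf_right b le_sup_left
  refine (hle.eq_of_not_lt fun hlt ↦ ?_).symm
  obtain ⟨d, had, hd⟩ := exists_covBy_le_of_lt hlt
  obtain ⟨μ, hμ, hμmax⟩ := h a d had
  have hdb : d ≤ b := hd.trans inf_le_right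
  have hγ₁ : γ₁ ≤ μ := hμmax (inf_eq_of_inf_eq_of_le_of_le h₁ had.le hdb)
  have hγ₂ : γ₂ ≤ μ := hμmax (inf_eq_of_inf_eq_of_le_of_le h₂ had.le hdb)
  have hdμ : d ≤ μ := hd.trans (inf_le_left.trans (sup_le hγ₁ hγ₂))
  exact had.ne (hμ.symm.trans (inf_eq_right.mpr hdμ))

end Lattice

/-- A finite lattice `Q` is meet-semidistributive iff for every cover
relation `α ⋖ β` the set `{γ : γ ⊓ β = α}` has a maximum element. -/
theorem meetSemidistrib_iff_covers {Q : Type*} [Lattice Q] [Fintype Q] :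
    (∀ α β : Q, α ≤ β → ∃ μ, μ ⊓ β = α ∧ ∀ γ, γ ⊓ β = α → γ ≤ μ) ↔
      ∀ α β : Q, α ⋖ β → ∃ μ, μ ⊓ β = α ∧ ∀ γ, γ ⊓ β = α → γ ≤ μ := by
  refine ⟨fun h α β hαβ ↦ h α β hαβ.le, fun h α β hαβ ↦ ?_⟩
  have hne : {γ | γ ⊓ β = α}.Nonempty := ⟨α, inf_eq_left.mpr hαβ⟩
  exact (supClosed_setOf_inf_eq h).exists_isGreatest_s14 (Set.toFinite _) hne
end
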